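/- arXiv:2011.10746 — 13 statements merged into one kernel-verified Lean document; each statement's English description precedes it below -/
import Mathlib

section
/- Let f be a convex function on an interval I and let x_1,...,x_n ∈ [a,b] ⊂ I. Then for any positive weights p_1,...,p_n with ∑p_i = 1, we have 0 ≤ ∑ p_i f(x_i) − f(∑ p_i x_i) ≤ f(a) + f(b) − 2 f((a+b)/2). -/
theorem jensen_with_upper_bound
    (n : ℕ) (a b : ℝ) (hab : a ≤ b)
    (I : Set ℝ) (hI : Convex ℝ I) (hsub : Set.Icc a b ⊆ I)
    (f : ℝ → ℝ) (hf : ConvexOn ℝ I f)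
    (p x : Fin n → ℝ)
    (hp : ∀ i, 0 < p i) (hps : ∑ i, p i = 1)
    (hx : ∀ i, x i ∈ Set.Icc a b) :
    0 ≤ ∑ i, p i * f (x i) - f (∑ i, p i * x i) ∧
      ∑ i, p i * f (x i) - f (∑ i, p i * x i) ≤ f a + f b - 2 * f ((a + b) / 2) := by
  have haI : a ∈ I := hsub ⟨le_rfl, hab⟩
  have hbI : b ∈ I := hsub ⟨hab, le_rfl⟩
  have hxI : ∀ i, x i ∈ I := fun i => hsub (hx i)
  have jensen : f (∑ i, p i * x i) ≤ ∑ i, p i * f (x i) := by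
    have := hf.map_sum_le (t := Finset.univ) (w := p) (p := x)
      (fun i _ => (hp i).le) (by simpa using hps) (fun i _ => hxI i)
    simpa [smul_eq_mul] using this
  refine ⟨by linarith, ?_⟩
  rcases eq_or_lt_of_le hab with rfl | hlt
  · have hx' : ∀ i, x i = a := fun i => le_antisymm (hx i).2 (hx i).1
    have h1 : ∑ i, p i * x i = a := by
      simp only [hx', ← Finset.sum_mul, hps, one_mul]
    have h2 : ∑ i, p i * f (x i) = f a := by
      simp only [hx', ← Finset.sum_mul, hps, one_mul]
    rw [h1, h2]
    have h3 : (a + a) / 2 = a := by ring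
    rw [h3]; linarith
  · have hba : (0:ℝ) < b - a := by linarith
    set t : Fin n → ℝ := fun i => (b - x i) / (b - a) with ht
    have ht0 : ∀ i, 0 ≤ t i := fun i =>
      div_nonneg (by linarith [(hx i).2]) hba.le
    have ht1 : ∀ i, t i ≤ 1 := fun i => by
      rw [ht]; exact (div_le_one hba).2 (by linarith [(hx i).1])
    have hxeq : ∀ i, x i = t i * a + (1 - t i) * b := fun i => by
      rw [ht]; field_simp; ring
    set T : ℝ := ∑ i, p i * t i with hT
    have hT0 : 0 ≤ T := Finset.sum_nonneg fun i _ =>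
      mul_nonneg (hp i).le (ht0 i)
    have hT1 : T ≤ 1 := by
      calc T ≤ ∑ i, p i := Finset.sum_le_sum fun i _ =>
              mul_le_of_le_one_right (hp i).le (ht1 i)
        _ = 1 := hps
    have hsum : ∑ i, p i * x i = T * a + (1 - T) * b := by
      have h1T : ∑ i, p i * (1 - t i) = 1 - T := by
        simp only [mul_sub, mul_one, Finset.sum_sub_distrib, hps, hT]
      calc ∑ i, p i * x i
          = ∑ i, (p i * t i * a + p i * (1 - t i) * b) := by
            apply Finset.sum_congr rfl; intro i _; rw [hxeq i]; ring
        _ = (∑ i, p i * t i) * a + (∑ i, p i * (1 - t i)) * b := by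
            rw [Finset.sum_add_distrib, Finset.sum_mul, Finset.sum_mul]
        _ = T * a + (1 - T) * b := by rw [h1T, hT]
    have hfbound : ∑ i, p i * f (x i) ≤ T * f a + (1 - T) * f b := by
      have h1T : ∑ i, p i * (1 - t i) = 1 - T := by
        simp only [mul_sub, mul_one, Finset.sum_sub_distrib, hps, hT]
      calc ∑ i, p i * f (x i)
          ≤ ∑ i, (p i * t i * f a + p i * (1 - t i) * f b) := by
            apply Finset.sum_le_sum; intro i _
            have := hf.2 haI hbI (ht0 i) (by linarith [ht1 i] : 0 ≤ 1 - t i)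
              (by ring : t i + (1 - t i) = 1)
            rw [smul_eq_mul, smul_eq_mul, smul_eq_mul, smul_eq_mul, ← hxeq i] at this
            nlinarith [hp i, this]
        _ = (∑ i, p i * t i) * f a + (∑ i, p i * (1 - t i)) * f b := by
            rw [Finset.sum_add_distrib, Finset.sum_mul, Finset.sum_mul]
        _ = T * f a + (1 - T) * f b := by rw [h1T, hT]
    set u : ℝ := T * a + (1 - T) * b with hu
    set v : ℝ := (1 - T) * a + T * b with hv
    have huI : u ∈ I := by
      have := hI haI hbI hT0 (by linarith : (0:ℝ) ≤ 1 - T) (by ring)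
      simpa [smul_eq_mul, hu] using this
    have hvI : v ∈ I := by
      have := hI haI hbI (by linarith : (0:ℝ) ≤ 1 - T) hT0 (by ring)
      simpa [smul_eq_mul, hv] using this
    have hmid : f ((a + b) / 2) ≤ (1/2) * f u + (1/2) * f v := by
      have := hf.2 huI hvI (by norm_num : (0:ℝ) ≤ 1/2) (by norm_num : (0:ℝ) ≤ 1/2)
        (by norm_num : (1:ℝ)/2 + 1/2 = 1)
      have heq : (1/2 : ℝ) • u + (1/2 : ℝ) • v = (a + b) / 2 := by
        simp only [smul_eq_mul, hu, hv]; ring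
      rw [heq] at this
      simpa [smul_eq_mul] using this
    have hfv : f v ≤ (1 - T) * f a + T * f b := by
      have := hf.2 haI hbI (by linarith : (0:ℝ) ≤ 1 - T) hT0 (by ring)
      simpa [smul_eq_mul, hv] using this
    rw [hsum]
    have hfu : f (T * a + (1 - T) * b) = f u := by rw [hu]
    rw [hfu]
    linarith
end

section
/- Let f be a convex function on [a,b] and x_1,...,x_n ∈ [a,b]. Then for any positive weights p_i summing to 1, 0 ≤ f(a) + f(b) − ∑ p_i f(x_i) − f(a + b − ∑ p_i x_i) ≤ 2[f(a) + f(b) − 2 f((a+b)/2)]. -/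
/-!
Write `y ∈ [a, b]` as `s a + t b` with `s + t = 1`; then `a + b - y = t a + s b`, and adding the two
convexity inequalities gives `f y + f (a + b - y) ≤ f a + f b`. Jensen's inequality for the
reflected points `a + b - xᵢ`, combined with this pointwise bound, is the Jensen–Mercer inequality.
For the upper bound, Jensen for the `xᵢ` and midpoint convexity at the mean `x̄` and its reflection
`a + b - x̄` bound the gap by `f a + f b - 2 f ((a + b) / 2)`, which is nonnegative because the gap is.
-/

open Set Finset

theorem Finset.sum_mul_sub_of_sum_eq_one {ι : Type*} {t : Finset ι} {w : ι → ℝ}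
    (hw : ∑ i ∈ t, w i = 1) (c : ℝ) (x : ι → ℝ) :
    ∑ i ∈ t, w i * (c - x i) = c - ∑ i ∈ t, w i * x i := by
  simp only [mul_sub, sum_sub_distrib, ← sum_mul, hw, one_mul]

namespace ConvexOn

variable {f : ℝ → ℝ}

theorem map_add_div_two_le {s : Set ℝ} (hf : ConvexOn ℝ s f) {u v : ℝ} (hu : u ∈ s)
    (hv : v ∈ s) : f ((u + v) / 2) ≤ (f u + f v) / 2 := by
  have h := hf.2 hu hv (by norm_num : (0 : ℝ) ≤ 1 / 2) (by norm_num : (0 : ℝ) ≤ 1 / 2) (by norm_num)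
  simp only [smul_eq_mul] at h
  calc f ((u + v) / 2) = f (1 / 2 * u + 1 / 2 * v) := by ring_nf
    _ ≤ 1 / 2 * f u + 1 / 2 * f v := h
    _ = (f u + f v) / 2 := by ring

variable {a b : ℝ}

theorem map_add_map_add_sub_le (hf : ConvexOn ℝ (Icc a b) f) {y : ℝ} (hy : y ∈ Icc a b) :
    f y + f (a + b - y) ≤ f a + f b := by
  have hab : a ≤ b := hy.1.trans hy.2
  have ha : a ∈ Icc a b := left_mem_Icc.2 hab
  have hb : b ∈ Icc a b := right_mem_Icc.2 hab
  rw [← segment_eq_Icc hab] at hy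
  obtain ⟨s, t, hs, ht, hst, rfl⟩ := hy
  have hts : t + s = 1 := by rw [add_comm, hst]
  have reflect : a + b - (s • a + t • b) = t • a + s • b := by
    simp only [smul_eq_mul]
    linear_combination (-(a + b)) * hst
  calc f (s • a + t • b) + f (a + b - (s • a + t • b))
      ≤ (s • f a + t • f b) + (t • f a + s • f b) := by
        rw [reflect]
        exact add_le_add (hf.2 ha hb hs ht hst) (hf.2 ha hb ht hs hts)
    _ = f a + f b := by
        simp only [smul_eq_mul]
        linear_combination (f a + f b) * hst

variable {ι : Type*} {t : Finset ι} {w x : ι → ℝ}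

theorem map_add_sub_sum_le (hf : ConvexOn ℝ (Icc a b) f) (h₀ : ∀ i ∈ t, 0 ≤ w i)
    (h₁ : ∑ i ∈ t, w i = 1) (hx : ∀ i ∈ t, x i ∈ Icc a b) :
    f (a + b - ∑ i ∈ t, w i * x i) ≤ f a + f b - ∑ i ∈ t, w i * f (x i) := by
  have hreflect : ∀ i ∈ t, a + b - x i ∈ Icc a b := fun i hi =>
    ⟨by linarith [(hx i hi).2], by linarith [(hx i hi).1]⟩
  calc f (a + b - ∑ i ∈ t, w i * x i) = f (∑ i ∈ t, w i • (a + b - x i)) := by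
        simp only [smul_eq_mul, sum_mul_sub_of_sum_eq_one h₁]
    _ ≤ ∑ i ∈ t, w i • f (a + b - x i) := hf.map_sum_le h₀ h₁ hreflect
    _ ≤ ∑ i ∈ t, w i * (f a + f b - f (x i)) := by
        refine sum_le_sum fun i hi => mul_le_mul_of_nonneg_left ?_ (h₀ i hi)
        linarith [hf.map_add_map_add_sub_le (hx i hi)]
    _ = f a + f b - ∑ i ∈ t, w i * f (x i) := sum_mul_sub_of_sum_eq_one h₁ _ _

theorem jensen_mercer_gap_le (hf : ConvexOn ℝ (Icc a b) f) (h₀ : ∀ i ∈ t, 0 ≤ w i)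
    (h₁ : ∑ i ∈ t, w i = 1) (hx : ∀ i ∈ t, x i ∈ Icc a b) :
    f a + f b - ∑ i ∈ t, w i * f (x i) - f (a + b - ∑ i ∈ t, w i * x i) ≤
      f a + f b - 2 * f ((a + b) / 2) := by
  set m := ∑ i ∈ t, w i * x i
  have hm : m ∈ Icc a b := (convex_Icc a b).sum_mem h₀ h₁ hx
  have hm' : a + b - m ∈ Icc a b := ⟨by linarith [hm.2], by linarith [hm.1]⟩
  have jensen : f m ≤ ∑ i ∈ t, w i * f (x i) := hf.map_sum_le h₀ h₁ hx
  have midpoint_convexity : f ((a + b) / 2) ≤ (f m + f (a + b - m)) / 2 := by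
    simpa using hf.map_add_div_two_le hm hm'
  linarith

end ConvexOn

theorem jensen_mercer_with_upper_bound_general
    (n : ℕ) (a b : ℝ)
    (f : ℝ → ℝ) (hf : ConvexOn ℝ (Set.Icc a b) f)
    (p x : Fin n → ℝ)
    (hp : ∀ i, 0 < p i) (hps : ∑ i, p i = 1)
    (hx : ∀ i, x i ∈ Set.Icc a b) :
    0 ≤ f a + f b - ∑ i, p i * f (x i) - f (a + b - ∑ i, p i * x i) ∧
      f a + f b - ∑ i, p i * f (x i) - f (a + b - ∑ i, p i * x i) ≤
        2 * (f a + f b - 2 * f ((a + b) / 2)) := by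
  have hp₀ : ∀ i ∈ Finset.univ, 0 ≤ p i := fun i _ => (hp i).le
  have hx' : ∀ i ∈ Finset.univ, x i ∈ Icc a b := fun i _ => hx i
  have mercer := hf.map_add_sub_sum_le hp₀ hps hx'
  have gap := hf.jensen_mercer_gap_le hp₀ hps hx'
  constructor <;> linarith

theorem jensen_mercer_with_upper_bound
    (n : ℕ) (a b : ℝ) (hab : a ≤ b)
    (f : ℝ → ℝ) (hf : ConvexOn ℝ (Set.Icc a b) f)
    (p x : Fin n → ℝ)
    (hp : ∀ i, 0 < p i) (hps : ∑ i, p i = 1)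
    (hx : ∀ i, x i ∈ Set.Icc a b) :
    0 ≤ f a + f b - ∑ i, p i * f (x i) - f (a + b - ∑ i, p i * x i) ∧
      f a + f b - ∑ i, p i * f (x i) - f (a + b - ∑ i, p i * x i) ≤
        2 * (f a + f b - 2 * f ((a + b) / 2)) :=
  jensen_mercer_with_upper_bound_general n a b f hf p x hp hps hx
end

section
/- Let 0 < s < 1, let 0 < a < b, and let p, q > 0 with p + q = 1. Then (p a + q b)^s − (p a^s + q b^s) ≤ C_s · [2((a+b)/2)^s − a^s − b^s], where C_s = (1−s) s^{s/(1−s)} / (2^{1−s} − 1). -/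
/-!
Scale `b` to `1` and put `t = a / b ∈ [0, 1]`; the claim becomes `0 ≤ excess t`, where
`excess = C_s · midGap - gap`. Both `excess` and `excess'` vanish at `t = 1`, and
`excess 0 ≥ 0` is the bound `x ^ s - x ≤ (1 - s) s ^ (s / (1 - s))` at `x = 1 - p`, which is
where `C_s` comes from.
The sign of `excess''` is that of `C_s - curvRatio`. For `p ≤ 1/2` it is nonnegative throughout
(because `C_s ≥ 1/2`); for `p ≥ 1/2` the ratio `curvRatio` is decreasing. Either way `excess` is
concave on some `[0, c]` and convex on `[c, 1]`: on `[c, 1]` convexity and `excess'(1) = 0` make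
`excess` decreasing, hence nonnegative, and on `[0, c]` concavity carries the sign over from the
endpoints.
-/

open Real Set

theorem rpow_sub_self_le {s x : ℝ} (hs0 : 0 < s) (hs1 : s < 1) (hx : 0 ≤ x) :
    x ^ s - x ≤ (1 - s) * s ^ (s / (1 - s)) := by
  set K := s ^ (s / (1 - s))
  have hK : K ^ (1 - s) = s ^ s := by
    rw [← rpow_mul hs0.le, div_mul_cancel₀ _ (sub_ne_zero.mpr hs1.ne')]
  have hsplit : x ^ s = (x / s) ^ s * K ^ (1 - s) := by
    rw [hK, div_rpow hx hs0.le, div_mul_cancel₀ _ (rpow_pos_of_pos hs0 s).ne']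
  have amgm := geom_mean_le_arith_mean2_weighted hs0.le (sub_nonneg.mpr hs1.le)
    (div_nonneg hx hs0.le) (rpow_nonneg hs0.le (s / (1 - s))) (add_sub_cancel s 1)
  rw [← hsplit, mul_div_cancel₀ _ hs0.ne'] at amgm
  linarith

theorem one_add_mul_sub_one_le_rpow {c r : ℝ} (hc : c ≤ -1) (hr : 0 < r) :
    1 + c * (r - 1) ≤ r ^ c := by
  have bernoulli := one_add_mul_self_le_rpow_one_add (s := r⁻¹ - 1)
    (by linarith [inv_pos.mpr hr]) (p := -c) (by linarith)
  rw [add_sub_cancel, inv_rpow hr.le, ← rpow_neg hr.le, neg_neg] at bernoulli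
  have hgap : (1 + -c * (r⁻¹ - 1)) - (1 + c * (r - 1)) = -c * (r - 1) ^ 2 / r := by
    field_simp
    ring
  have : 0 ≤ -c * (r - 1) ^ 2 / r := div_nonneg (by nlinarith [sq_nonneg (r - 1)]) hr.le
  linarith

theorem rpow_add_mul_sub_le_rpow {c x y : ℝ} (hc : c ≤ -1) (hx : 0 < x) (hy : 0 < y) :
    y ^ c + c * y ^ (c - 1) * (x - y) ≤ x ^ c := by
  have h := mul_le_mul_of_nonneg_right (one_add_mul_sub_one_le_rpow hc (div_pos hx hy))
    (rpow_pos_of_pos hy c).le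
  rw [div_rpow hx.le hy.le, div_mul_cancel₀ _ (rpow_pos_of_pos hy c).ne'] at h
  calc y ^ c + c * y ^ (c - 1) * (x - y) = (1 + c * (x / y - 1)) * y ^ c := by
        rw [rpow_sub_one hy.ne']
        field_simp
    _ ≤ x ^ c := h

theorem AntitoneOn.exists_threshold {α β : Type*} [ConditionallyCompleteLinearOrder α]
    [LinearOrder β] {f : α → β} {a b : α} (C : β) (hab : a ≤ b)
    (hf : AntitoneOn f (Ioo a b)) :
    ∃ c ∈ Icc a b, (∀ x ∈ Ioo a c, C < f x) ∧ ∀ x ∈ Ioo c b, f x ≤ C := by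
  set S := insert b {x | x ∈ Ioo a b ∧ f x ≤ C}
  have hS : S.Nonempty := insert_nonempty _ _
  have hbdd : BddBelow S := ⟨a, by rintro x (rfl | ⟨hx, -⟩); exacts [hab, hx.1.le]⟩
  refine ⟨sInf S, ⟨le_csInf hS ?_, csInf_le hbdd (mem_insert b _)⟩, ?_, ?_⟩
  · rintro x (rfl | ⟨hx, -⟩); exacts [hab, hx.1.le]
  · intro x hx
    by_contra! hle
    exact (csInf_le hbdd (mem_insert_of_mem b ⟨⟨hx.1, hx.2.trans_le (csInf_le hbdd
      (mem_insert b _))⟩, hle⟩)).not_gt hx.2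
  · intro x hx
    obtain ⟨y, hyS, hyx⟩ := (csInf_lt_iff hbdd hS).mp hx.1
    rcases hyS with rfl | ⟨hy, hfy⟩
    · exact absurd hx.2 hyx.not_gt
    · exact (hf hy ⟨hy.1.trans hyx, hx.2⟩ hyx.le).trans hfy

theorem nonneg_of_deriv2_sign_change {f f' f'' : ℝ → ℝ} {a b c x : ℝ} (hc : c ∈ Icc a b)
    (hf : ContinuousOn f (Icc a b))
    (hf' : ∀ y ∈ Ioc a b, HasDerivAt f (f' y) y)
    (hf'' : ∀ y ∈ Ioc a b, HasDerivAt f' (f'' y) y)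
    (hneg : ∀ y ∈ Ioo a c, f'' y ≤ 0) (hpos : ∀ y ∈ Ioo c b, 0 ≤ f'' y)
    (ha : 0 ≤ f a) (hb : f b = 0) (hb' : f' b = 0) (hx : x ∈ Icc a b) : 0 ≤ f x := by
  have hf'_mono : MonotoneOn f' (Ioc c b) := by
    refine monotoneOn_of_hasDerivWithinAt_nonneg (f' := f'') (convex_Ioc c b)
      (fun y hy => (hf'' y ⟨hc.1.trans_lt hy.1, hy.2⟩).continuousAt.continuousWithinAt)
      (fun y hy => ?_) (fun y hy => ?_) <;> rw [interior_Ioc] at hy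
    · exact (hf'' y ⟨hc.1.trans_lt hy.1, hy.2.le⟩).hasDerivWithinAt
    · exact hpos y hy
  have hf_anti : AntitoneOn f (Icc c b) := by
    refine antitoneOn_of_hasDerivWithinAt_nonpos (f' := f') (convex_Icc c b)
      (hf.mono (Icc_subset_Icc_left hc.1)) (fun y hy => ?_) (fun y hy => ?_) <;>
      rw [interior_Icc] at hy
    · exact (hf' y ⟨hc.1.trans_lt hy.1, hy.2.le⟩).hasDerivWithinAt
    · simpa only [hb'] using hf'_mono ⟨hy.1, hy.2.le⟩ ⟨hy.1.trans hy.2, le_rfl⟩ hy.2.le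
  have hright : ∀ y ∈ Icc c b, 0 ≤ f y := fun y hy =>
    hb ▸ hf_anti hy ⟨hc.2, le_rfl⟩ hy.2
  have hf_conc : ConcaveOn ℝ (Icc a c) f := by
    refine concaveOn_of_hasDerivWithinAt2_nonpos (f' := f') (f'' := f'') (convex_Icc a c)
      (hf.mono (Icc_subset_Icc_right hc.2)) ?_ ?_ ?_ <;> rw [interior_Icc] <;> intro y hy
    · exact (hf' y ⟨hy.1, hy.2.le.trans hc.2⟩).hasDerivWithinAt
    · exact (hf'' y ⟨hy.1, hy.2.le.trans hc.2⟩).hasDerivWithinAt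
    · exact hneg y hy
  rcases le_total x c with hxc | hxc
  · exact (le_min ha (hright c ⟨le_rfl, hc.2⟩)).trans
      (hf_conc.min_le_of_mem_Icc ⟨le_rfl, hc.1⟩ ⟨hc.1, le_rfl⟩ ⟨hx.1, hxc⟩)
  · exact hright x ⟨hxc, hx.2⟩

noncomputable section

namespace RpowJensenGap

/- `gap s p t` is the Jensen gap of `x ↦ x ^ s` at the points `t, 1` with weights `p, 1 - p`;
`midGap s t` is twice the one with weights `1/2, 1/2`, as
`2 ((1 + t) / 2) ^ s = 2 ^ (1 - s) (1 + t) ^ s`. -/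
def gap (s p t : ℝ) : ℝ := (1 - p + p * t) ^ s - p * t ^ s - (1 - p)

def midGap (s t : ℝ) : ℝ := 2 ^ (1 - s) * (1 + t) ^ s - 1 - t ^ s

def excess (s p C t : ℝ) : ℝ := C * midGap s t - gap s p t

def excessDeriv (s p C t : ℝ) : ℝ :=
  C * s * (2 ^ (1 - s) * (1 + t) ^ (s - 1) - t ^ (s - 1))
    - s * p * ((1 - p + p * t) ^ (s - 1) - t ^ (s - 1))

def gapCurv (s p t : ℝ) : ℝ := 1 - p * (t ^ (2 - s) * (1 - p + p * t) ^ (s - 2))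

def midCurv (s t : ℝ) : ℝ := 1 - 2 ^ (1 - s) * (t ^ (2 - s) * (1 + t) ^ (s - 2))

def curvRatio (s p t : ℝ) : ℝ := p * gapCurv s p t / midCurv s t

variable {s p C t : ℝ}

lemma one_sub_add_mul_pos (hp0 : 0 < p) (hp1 : p ≤ 1) (ht : 0 < t) : 0 < 1 - p + p * t := by
  linarith [mul_pos hp0 ht]

lemma hasDerivAt_one_sub_add_mul : HasDerivAt (fun t : ℝ => 1 - p + p * t) p t := by
  simpa using ((hasDerivAt_id t).const_mul p).const_add (1 - p)

lemma hasDerivAt_excess (hd : 0 < 1 - p + p * t) (ht : 0 < t) :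
    HasDerivAt (excess s p C) (excessDeriv s p C t) t := by
  have h1t : (1 : ℝ) + t ≠ 0 := by linarith
  have hA := ((hasDerivAt_id t).const_add 1).rpow_const (p := s) (Or.inl h1t)
  have hB := (hasDerivAt_id t).rpow_const (p := s) (Or.inl ht.ne')
  have hD := hasDerivAt_one_sub_add_mul.rpow_const (p := s) (Or.inl hd.ne')
  refine ((((hA.const_mul (2 ^ (1 - s))).sub_const 1).sub hB).const_mul C |>.sub
    ((hD.sub (hB.const_mul p)).sub_const (1 - p))).congr_deriv ?_
  simp only [excessDeriv, id]
  ring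

lemma hasDerivAt_excessDeriv (hd : 0 < 1 - p + p * t) (ht : 0 < t) :
    HasDerivAt (excessDeriv s p C)
      (s * (1 - s) * t ^ (s - 2) * (C * midCurv s t - p * gapCurv s p t)) t := by
  have h1t : (1 : ℝ) + t ≠ 0 := by linarith
  have hA := ((hasDerivAt_id t).const_add 1).rpow_const (p := s - 1) (Or.inl h1t)
  have hB := (hasDerivAt_id t).rpow_const (p := s - 1) (Or.inl ht.ne')
  have hD := hasDerivAt_one_sub_add_mul.rpow_const (p := s - 1) (Or.inl hd.ne')
  refine ((((hA.const_mul (2 ^ (1 - s))).sub hB).const_mul (C * s)).sub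
    ((hD.sub hB).const_mul (s * p))).congr_deriv ?_
  have hcancel : t ^ (s - 2) * t ^ (2 - s) = 1 := by
    rw [← rpow_add ht]; norm_num
  simp only [midCurv, gapCurv, id, show s - 1 - 1 = s - 2 by ring]
  linear_combination (s * (1 - s) * (C * 2 ^ (1 - s) * (1 + t) ^ (s - 2)
    - p * p * (1 - p + p * t) ^ (s - 2))) * hcancel

lemma hasDerivAt_gapCurv (hd : 0 < 1 - p + p * t) (ht : 0 < t) :
    HasDerivAt (gapCurv s p)
      (-(p * (1 - p) * (2 - s) * (t ^ (1 - s) * (1 - p + p * t) ^ (s - 3)))) t := by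
  have hX := (hasDerivAt_id t).rpow_const (p := 2 - s) (Or.inl ht.ne')
  have hD := hasDerivAt_one_sub_add_mul.rpow_const (p := s - 2) (Or.inl hd.ne')
  refine (((hX.mul hD).const_mul p).neg.const_add 1).congr_deriv ?_
  have e1 : (1 - p + p * t) ^ (s - 2) = (1 - p + p * t) ^ (s - 3) * (1 - p + p * t) := by
    rw [← rpow_add_one hd.ne']; ring_nf
  have e2 : t ^ (2 - s) = t ^ (1 - s) * t := by
    rw [← rpow_add_one ht.ne']; ring_nf
  simp only [id, show 2 - s - 1 = 1 - s by ring, show s - 2 - 1 = s - 3 by ring, e1, e2]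
  ring

lemma hasDerivAt_midCurv (ht : 0 < t) :
    HasDerivAt (midCurv s) (-(2 ^ (1 - s) * (2 - s) * (t ^ (1 - s) * (1 + t) ^ (s - 3)))) t := by
  have h1t : 0 < 1 + t := by linarith
  have hX := (hasDerivAt_id t).rpow_const (p := 2 - s) (Or.inl ht.ne')
  have hD := ((hasDerivAt_id t).const_add 1).rpow_const (p := s - 2) (Or.inl h1t.ne')
  refine (((hX.mul hD).const_mul (2 ^ (1 - s))).neg.const_add 1).congr_deriv ?_
  have e1 : (1 + t) ^ (s - 2) = (1 + t) ^ (s - 3) * (1 + t) := by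
    rw [← rpow_add_one h1t.ne']; ring_nf
  have e2 : t ^ (2 - s) = t ^ (1 - s) * t := by
    rw [← rpow_add_one ht.ne']; ring_nf
  simp only [id, show 2 - s - 1 = 1 - s by ring, show s - 2 - 1 = s - 3 by ring, e1, e2]
  ring

lemma continuous_excess (hs : 0 ≤ s) : Continuous (excess s p C) := by
  have := continuous_rpow_const hs
  unfold excess midGap gap
  fun_prop

lemma excess_one : excess s p C 1 = 0 := by
  have h : (2 : ℝ) ^ (1 - s) * 2 ^ s = 2 := by
    rw [← rpow_add two_pos]; norm_num
  simp only [excess, midGap, gap, one_add_one_eq_two, one_rpow, mul_one, sub_add_cancel]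
  linear_combination C * h

lemma excessDeriv_one : excessDeriv s p C 1 = 0 := by
  have h : (2 : ℝ) ^ (1 - s) * 2 ^ (s - 1) = 1 := by
    rw [← rpow_add two_pos]; norm_num
  simp only [excessDeriv, one_add_one_eq_two, one_rpow, mul_one, sub_add_cancel]
  linear_combination (C * s) * h

lemma excess_zero (hs : 0 < s) :
    excess s p C 0 = C * (2 ^ (1 - s) - 1) - ((1 - p) ^ s - (1 - p)) := by
  simp only [excess, midGap, gap, mul_zero, add_zero, one_rpow, zero_rpow hs.ne']
  ring

lemma rpow_mul_rpow_neg_le_one {r x y : ℝ} (hr : 0 ≤ r) (hx : 0 < x) (hxy : x ≤ y) :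
    x ^ r * y ^ (-r) ≤ 1 := by
  have hy := hx.trans_le hxy
  rw [rpow_neg hy.le, ← div_eq_mul_inv, div_le_one (rpow_pos_of_pos hy r)]
  exact rpow_le_rpow hx.le hxy hr

lemma half_le_midCurv (hs1 : s < 1) (ht : 0 < t) (ht1 : t ≤ 1) : 1 / 2 ≤ midCurv s t := by
  have h := rpow_mul_rpow_neg_le_one (r := 2 - s) (by linarith) (by linarith : 0 < 2 * t)
    (by linarith : 2 * t ≤ 1 + t)
  have h2 : (2 : ℝ) ^ (2 - s) = 2 * 2 ^ (1 - s) := by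
    rw [show 2 - s = 1 + (1 - s) by ring, rpow_add two_pos, rpow_one]
  rw [mul_rpow two_pos.le ht.le, h2, neg_sub] at h
  unfold midCurv
  linarith

lemma two_rpow_mul_rpow_le_of_le_half (hs1 : s < 1) (hp0 : 0 < p) (hp : p ≤ 1 / 2)
    (ht : 0 < t) (ht1 : t ≤ 1) :
    2 ^ (1 - s) * (1 + t) ^ (s - 2)
      ≤ (1 - 2 * p) * t ^ (s - 2) + 2 * p ^ 2 * (1 - p + p * t) ^ (s - 2) := by
  -- Tangent lines of the convex `x ↦ x ^ (s - 2)` at the midpoint `m`.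
  set m := (1 + t) / 2
  have hm : 0 < m := by positivity
  have hd := one_sub_add_mul_pos hp0 (by linarith) ht
  have hc : s - 2 ≤ -1 := by linarith
  have tangent_t := rpow_add_mul_sub_le_rpow hc ht hm
  have tangent_d := rpow_add_mul_sub_le_rpow hc hd hm
  have hslope : 0 ≤ (s - 2) * m ^ (s - 2 - 1) *
      ((1 - 2 * p) * (t - m) + 2 * p ^ 2 * (1 - p + p * t - m)) := by
    have hbracket : (1 - 2 * p) * (t - m) + 2 * p ^ 2 * (1 - p + p * t - m)
        = -((1 - t) * (1 - 2 * p) * (1 / 2 - p ^ 2)) := by ring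
    have hfactor : 0 ≤ (1 - t) * (1 - 2 * p) * (1 / 2 - p ^ 2) := by
      apply mul_nonneg (mul_nonneg _ _) _ <;> nlinarith
    have := mul_nonneg (mul_nonneg (by linarith : (0:ℝ) ≤ 2 - s)
      (rpow_pos_of_pos hm (s - 2 - 1)).le) hfactor
    rw [hbracket]
    linarith
  have hmid : 2 ^ (1 - s) * (1 + t) ^ (s - 2) = m ^ (s - 2) / 2 := by
    have h2 : (2 : ℝ) ^ (1 - s) * 2 ^ (s - 2) = 1 / 2 := by
      rw [← rpow_add two_pos, show 1 - s + (s - 2) = -1 by ring, rpow_neg_one]; norm_num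
    have : (0:ℝ) < 2 ^ (s - 2) := by positivity
    rw [div_rpow (by linarith) two_pos.le, div_div, eq_div_iff (by positivity)]
    linear_combination 2 * (1 + t) ^ (s - 2) * h2
  have hweight : 1 / 2 ≤ 1 - 2 * p + 2 * p ^ 2 := by nlinarith [sq_nonneg (2 * p - 1)]
  have := rpow_pos_of_pos hm (s - 2)
  rw [hmid]
  nlinarith [mul_le_mul_of_nonneg_left tangent_t (by linarith : (0:ℝ) ≤ 1 - 2 * p),
    mul_le_mul_of_nonneg_left tangent_d (by positivity : (0:ℝ) ≤ 2 * p ^ 2)]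

lemma curvRatio_le_of_le_half (hs1 : s < 1) (hp0 : 0 < p) (hp : p ≤ 1 / 2) (hC : 1 / 2 ≤ C)
    (ht : 0 < t) (ht1 : t ≤ 1) : curvRatio s p t ≤ C := by
  have hmid := half_le_midCurv hs1 ht ht1
  rw [curvRatio, div_le_iff₀ (by linarith)]
  have hcancel : t ^ (2 - s) * t ^ (s - 2) = 1 := by
    rw [← rpow_add ht]; norm_num
  have key := two_rpow_mul_rpow_le_of_le_half hs1 hp0 hp ht ht1
  unfold gapCurv
  unfold midCurv at hmid ⊢
  linear_combination (t ^ (2 - s) / 2) * key + (1 - 2 * p) / 2 * hcancel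
    + (1 - 2 ^ (1 - s) * (t ^ (2 - s) * (1 + t) ^ (s - 2))) * hC

lemma cube_le_of_half_le (hp : 1 / 2 ≤ p) (hp1 : p ≤ 1) (ht : 0 ≤ t) :
    (1 - p + p * t) ^ 3
      ≤ p * (1 - p) * (1 + t) ^ 2 * (1 - p + p * t) + p * (2 * p - 1) * t ^ 3 := by
  have hquad : 0 ≤ 1 - t + t ^ 2 := by nlinarith [sq_nonneg (t - 1 / 2)]
  have hfactor : 0 ≤ (1 - p) * (2 * p - 1) * ((1 - p) + p * t * (1 - t + t ^ 2)) :=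
    mul_nonneg (mul_nonneg (by linarith) (by linarith))
      (add_nonneg (by linarith) (mul_nonneg (mul_nonneg (by linarith) ht) hquad))
  linear_combination hfactor

lemma two_rpow_mul_rpow_le_of_half_le (hs0 : 0 < s) (hs1 : s < 1) (hp : 1 / 2 ≤ p) (hp1 : p ≤ 1)
    (ht : 0 < t) (ht1 : t ≤ 1) :
    2 ^ (1 - s) * (1 - p + p * t) ^ (3 - s)
      ≤ p * (1 - p) * (1 + t) ^ (3 - s) + 2 ^ (1 - s) * p * (2 * p - 1) * t ^ (3 - s) := by
  set d := 1 - p + p * t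
  have hd : 0 < d := one_sub_add_mul_pos (by linarith) hp1 ht
  have h1t : 0 < 1 + t := by linarith
  have hsplit {x : ℝ} (hx : 0 < x) (k : ℕ) (r : ℝ) : x ^ (k + r) = x ^ k * x ^ r := by
    rw [rpow_add hx, rpow_natCast]
  -- `1 + t ≥ 2 d` and `t ≤ d` since `p ≥ 1 / 2`.
  have hmid : 2 ^ (1 - s) * d ^ (1 - s) ≤ (1 + t) ^ (1 - s) := by
    rw [← mul_rpow two_pos.le hd.le]
    exact rpow_le_rpow (by positivity) (by nlinarith) (by linarith)
  have hend : d ^ (-s) ≤ t ^ (-s) := rpow_le_rpow_of_nonpos ht (by nlinarith) (by linarith)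
  have hcube := cube_le_of_half_le hp hp1 ht.le
  have e1 : d ^ (3 - s) = d ^ 3 * d ^ (-s) := by rw [← hsplit hd]; norm_num [sub_eq_add_neg]
  have e2 : (1 + t) ^ (3 - s) = (1 + t) ^ 2 * (1 + t) ^ (1 - s) := by
    rw [← hsplit h1t]; congr 1; push_cast; ring
  have e3 : t ^ (3 - s) = t ^ 3 * t ^ (-s) := by rw [← hsplit ht]; norm_num [sub_eq_add_neg]
  have e4 : d ^ (1 - s) = d * d ^ (-s) := by rw [sub_eq_add_neg, rpow_add hd, rpow_one]
  rw [e4] at hmid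
  rw [e1, e2, e3]
  have hp' : 0 ≤ p * (1 - p) * (1 + t) ^ 2 := mul_nonneg (by nlinarith) (sq_nonneg _)
  have hp'' : 0 ≤ 2 ^ (1 - s) * p * (2 * p - 1) * t ^ 3 :=
    mul_nonneg (mul_nonneg (by positivity) (by linarith)) (by positivity)
  linear_combination (2 ^ (1 - s) * d ^ (-s)) * hcube + mul_le_mul_of_nonneg_left hmid hp'
    + mul_le_mul_of_nonneg_left hend hp''

lemma two_rpow_mul_gapCurv_le (hs0 : 0 < s) (hs1 : s < 1) (hp : 1 / 2 ≤ p) (hp1 : p ≤ 1)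
    (ht : 0 < t) (ht1 : t ≤ 1) :
    2 ^ (1 - s) * (1 + t) ^ (s - 3) * gapCurv s p t
      ≤ p * (1 - p) * (1 - p + p * t) ^ (s - 3) * midCurv s t := by
  have key := two_rpow_mul_rpow_le_of_half_le hs0 hs1 hp hp1 ht ht1
  set d := 1 - p + p * t
  have hd : 0 < d := one_sub_add_mul_pos (by linarith) hp1 ht
  have h1t : 0 < 1 + t := by linarith
  have hinv {x : ℝ} (hx : 0 < x) : x ^ (3 - s) * x ^ (s - 3) = 1 := by
    rw [← rpow_add hx]; norm_num
  have hstep {x : ℝ} (hx : 0 < x) (r : ℝ) : x ^ (r + 1) = x ^ r * x := rpow_add_one hx.ne' r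
  have huv : 0 ≤ (1 + t) ^ (s - 3) * d ^ (s - 3) := by positivity
  rw [show t ^ (3 - s) = t ^ (2 - s) * t by rw [← hstep ht]; ring_nf] at key
  unfold gapCurv midCurv
  rw [show s - 2 = s - 3 + 1 by ring, hstep hd, hstep h1t]
  linear_combination mul_le_mul_of_nonneg_right key huv
    + p * (1 - p) * d ^ (s - 3) * hinv h1t - 2 ^ (1 - s) * (1 + t) ^ (s - 3) * hinv hd

lemma curvRatio_antitoneOn (hs0 : 0 < s) (hs1 : s < 1) (hp : 1 / 2 ≤ p) (hp1 : p ≤ 1) :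
    AntitoneOn (curvRatio s p) (Ioo 0 1) := by
  have hp0 : 0 < p := by linarith
  have hderiv : ∀ u ∈ Ioo (0 : ℝ) 1, HasDerivAt (curvRatio s p)
      ((p * -(p * (1 - p) * (2 - s) * (u ^ (1 - s) * (1 - p + p * u) ^ (s - 3))) * midCurv s u
        - p * gapCurv s p u * -(2 ^ (1 - s) * (2 - s) * (u ^ (1 - s) * (1 + u) ^ (s - 3))))
        / midCurv s u ^ 2) u := fun u hu =>
    ((hasDerivAt_gapCurv (one_sub_add_mul_pos hp0 hp1 hu.1) hu.1).const_mul p).div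
      (hasDerivAt_midCurv hu.1) (by linarith [half_le_midCurv hs1 hu.1 hu.2.le])
  refine antitoneOn_of_deriv_nonpos (convex_Ioo 0 1)
    (fun u hu => (hderiv u hu).continuousAt.continuousWithinAt) ?_ ?_ <;> rw [interior_Ioo]
  · exact fun u hu => (hderiv u hu).differentiableAt.differentiableWithinAt
  · intro u hu
    rw [(hderiv u hu).deriv]
    have hcross := two_rpow_mul_gapCurv_le hs0 hs1 hp hp1 hu.1 hu.2.le
    have hfac : 0 ≤ p * (2 - s) * u ^ (1 - s) :=
      mul_nonneg (mul_nonneg hp0.le (by linarith)) (rpow_pos_of_pos hu.1 _).le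
    refine div_nonpos_of_nonpos_of_nonneg ?_ (sq_nonneg _)
    linear_combination mul_le_mul_of_nonneg_left hcross hfac

lemma excess_nonneg (hs0 : 0 < s) (hs1 : s < 1) (hp0 : 0 < p) (hp1 : p ≤ 1) (hC : 1 / 2 ≤ C)
    (hC0 : (1 - p) ^ s - (1 - p) ≤ C * (2 ^ (1 - s) - 1)) (ht : t ∈ Icc 0 1) :
    0 ≤ excess s p C t := by
  obtain ⟨c, hc, hbelow, habove⟩ : ∃ c ∈ Icc (0 : ℝ) 1,
      (∀ x ∈ Ioo 0 c, C < curvRatio s p x) ∧ ∀ x ∈ Ioo c 1, curvRatio s p x ≤ C := by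
    rcases le_or_gt p (1 / 2) with hp | hp
    · exact ⟨0, left_mem_Icc.2 zero_le_one, fun x hx => (lt_asymm hx.1 hx.2).elim,
        fun x hx => curvRatio_le_of_le_half hs1 hp0 hp hC hx.1 hx.2.le⟩
    · exact (curvRatio_antitoneOn hs0 hs1 hp.le hp1).exists_threshold C zero_le_one
  have hd {x : ℝ} (hx : x ∈ Ioc 0 1) := one_sub_add_mul_pos hp0 hp1 hx.1
  have hweight {x : ℝ} (hx : 0 < x) : 0 ≤ s * (1 - s) * x ^ (s - 2) :=
    mul_nonneg (mul_nonneg hs0.le (by linarith)) (rpow_pos_of_pos hx _).le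
  refine nonneg_of_deriv2_sign_change hc (continuous_excess hs0.le).continuousOn
    (fun x hx => hasDerivAt_excess (hd hx) hx.1) (fun x hx => hasDerivAt_excessDeriv (hd hx) hx.1)
    (fun x hx => ?_) (fun x hx => ?_) ?_ excess_one excessDeriv_one ht
  · have hmid := half_le_midCurv hs1 hx.1 (hx.2.le.trans hc.2)
    have := (lt_div_iff₀ (by linarith)).1 (hbelow x hx)
    exact mul_nonpos_of_nonneg_of_nonpos (hweight hx.1) (by linarith)
  · have hx0 : 0 < x := hc.1.trans_lt hx.1
    have hmid := half_le_midCurv hs1 hx0 hx.2.le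
    have := (div_le_iff₀ (by linarith)).1 (habove x hx)
    exact mul_nonneg (hweight hx0) (by linarith)
  · rw [excess_zero hs0]
    linarith

lemma jensenGap_eq_rpow_mul_gap {b : ℝ} (hp0 : 0 ≤ p) (hp1 : p ≤ 1) (ht : 0 ≤ t)
    (hb : 0 ≤ b) :
    (p * (b * t) + (1 - p) * b) ^ s - (p * (b * t) ^ s + (1 - p) * b ^ s)
      = b ^ s * gap s p t := by
  rw [show p * (b * t) + (1 - p) * b = b * (1 - p + p * t) by ring, mul_rpow hb (by nlinarith),
    mul_rpow hb ht, gap]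
  ring

lemma midpointGap_eq_rpow_mul_midGap {b : ℝ} (ht : 0 ≤ t) (hb : 0 ≤ b) :
    2 * ((b * t + b) / 2) ^ s - (b * t) ^ s - b ^ s = b ^ s * midGap s t := by
  have h2 : (2 : ℝ) * (2 ^ s)⁻¹ = 2 ^ (1 - s) := by
    rw [rpow_sub two_pos, rpow_one, div_eq_mul_inv]
  rw [show (b * t + b) / 2 = b * (1 + t) / 2 by ring, div_rpow (by positivity) two_pos.le,
    mul_rpow hb (by positivity), mul_rpow hb ht, midGap, ← h2]
  ring

def charConst (s : ℝ) : ℝ := (1 - s) * s ^ (s / (1 - s)) / (2 ^ (1 - s) - 1)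

lemma one_lt_two_rpow (hs1 : s < 1) : 1 < (2 : ℝ) ^ (1 - s) :=
  one_lt_rpow one_lt_two (by linarith)

lemma rpow_sub_self_le_charConst_mul (hs0 : 0 < s) (hs1 : s < 1) {x : ℝ} (hx : 0 ≤ x) :
    x ^ s - x ≤ charConst s * (2 ^ (1 - s) - 1) := by
  rw [charConst, div_mul_cancel₀ _ (sub_pos.2 (one_lt_two_rpow hs1)).ne']
  exact rpow_sub_self_le hs0 hs1 hx

lemma half_le_charConst (hs0 : 0 < s) (hs1 : s < 1) : 1 / 2 ≤ charConst s := by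
  have h := rpow_sub_self_le_charConst_mul hs0 hs1 (inv_nonneg.2 zero_le_two)
  have h2 : (2 : ℝ) ^ (1 - s) = 2 * (2 ^ s)⁻¹ := by
    rw [rpow_sub two_pos, rpow_one, div_eq_mul_inv]
  rw [inv_rpow zero_le_two] at h
  refine le_of_mul_le_mul_right ?_ (sub_pos.2 (one_lt_two_rpow hs1))
  linarith

end RpowJensenGap

end

open RpowJensenGap in
theorem characteristic_number_pow_lt_one
    (s a b p q : ℝ) (hs0 : 0 < s) (hs1 : s < 1) (ha : 0 < a) (hab : a < b)
    (hp : 0 < p) (hq : 0 < q) (hpq : p + q = 1) :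
    (p * a + q * b) ^ s - (p * a ^ s + q * b ^ s) ≤
      ((1 - s) * s ^ (s / (1 - s)) / ((2:ℝ) ^ (1 - s) - 1)) *
        (2 * ((a + b) / 2) ^ s - a ^ s - b ^ s) := by
  have hb : 0 < b := ha.trans hab
  obtain rfl : q = 1 - p := by linarith
  have ht : 0 ≤ a / b := div_nonneg ha.le hb.le
  have key := excess_nonneg hs0 hs1 hp (by linarith) (half_le_charConst hs0 hs1)
    (rpow_sub_self_le_charConst_mul hs0 hs1 (by linarith))
    ⟨ht, div_le_one_of_le₀ hab.le hb.le⟩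
  rw [← mul_div_cancel₀ a hb.ne', jensenGap_eq_rpow_mul_gap hp.le (by linarith) ht hb.le,
    midpointGap_eq_rpow_mul_midGap ht hb.le]
  change _ ≤ charConst s * _
  unfold excess at key
  linear_combination mul_nonneg (rpow_pos_of_pos hb s).le key
end

section
/- Let g be twice continuously differentiable on [a,b], and let m = min_{t∈[a,b]} g''(t), M = max_{t∈[a,b]} g''(t). Then for x_1,...,x_n ∈ [a,b] and positive weights p_i with ∑p_i = 1, (m/2)[∑p_i x_i² − (∑p_i x_i)²] ≤ ∑ p_i g(x_i) − g(∑ p_i x_i) ≤ (M/2)[∑p_i x_i² − (∑p_i x_i)²]. -/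
/-! Subtracting the quadratic `c / 2 * t ^ 2` shifts the second derivative by `c`, so
`g - m / 2 * t ^ 2` is convex and `g - M / 2 * t ^ 2` is concave on `[a, b]`. Jensen's
inequality for these two functions gives the two bounds, since the Jensen gap is linear in
the function and the Jensen gap of `t ^ 2` is the variance `∑ pᵢ xᵢ² - (∑ pᵢ xᵢ)²`. -/

open Finset

def jensenGap {ι : Type*} [Fintype ι] (w x : ι → ℝ) (f : ℝ → ℝ) : ℝ :=
  ∑ i, w i * f (x i) - f (∑ i, w i * x i)

section JensenGap

variable {ι : Type*} [Fintype ι] {w x : ι → ℝ} {s : Set ℝ} {f : ℝ → ℝ}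

lemma jensenGap_sub_const_mul (h : ℝ → ℝ) (c : ℝ) :
    jensenGap w x (fun t => f t - c * h t) = jensenGap w x f - c * jensenGap w x h := by
  simp only [jensenGap, mul_sub, sum_sub_distrib, mul_sum]
  simp only [mul_left_comm (w _) c]
  ring

lemma ConvexOn.jensenGap_nonneg (hf : ConvexOn ℝ s f) (h₀ : ∀ i, 0 ≤ w i)
    (h₁ : ∑ i, w i = 1) (hx : ∀ i, x i ∈ s) : 0 ≤ jensenGap w x f :=
  sub_nonneg.2 (hf.map_sum_le (fun i _ => h₀ i) h₁ fun i _ => hx i)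

lemma ConcaveOn.jensenGap_nonpos (hf : ConcaveOn ℝ s f) (h₀ : ∀ i, 0 ≤ w i)
    (h₁ : ∑ i, w i = 1) (hx : ∀ i, x i ∈ s) : jensenGap w x f ≤ 0 :=
  sub_nonpos.2 (hf.le_map_sum (fun i _ => h₀ i) h₁ fun i _ => hx i)

end JensenGap

section SecondDerivative

variable {s : Set ℝ} {f f' f'' : ℝ → ℝ} {c : ℝ}

lemma HasDerivAt.sub_half_mul_sq {t : ℝ} (hf : HasDerivAt f (f' t) t) :
    HasDerivAt (fun t => f t - c / 2 * t ^ 2) (f' t - c * t) t :=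
  (hf.sub ((hasDerivAt_pow 2 t).const_mul (c / 2))).congr_deriv (by push_cast; ring)

lemma HasDerivAt.sub_mul_id {t : ℝ} (hf : HasDerivAt f' (f'' t) t) :
    HasDerivAt (fun t => f' t - c * t) (f'' t - c) t :=
  (hf.sub ((hasDerivAt_id' t).const_mul c)).congr_deriv (by ring)

lemma convexOn_sub_half_mul_sq (hs : Convex ℝ s)
    (hf' : ∀ t ∈ s, HasDerivAt f (f' t) t) (hf'' : ∀ t ∈ s, HasDerivAt f' (f'' t) t)
    (hc : ∀ t ∈ s, c ≤ f'' t) : ConvexOn ℝ s (fun t => f t - c / 2 * t ^ 2) :=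
  convexOn_of_hasDerivWithinAt2_nonneg hs
    (fun t ht => (hf' t ht).sub_half_mul_sq.continuousAt.continuousWithinAt)
    (fun t ht => (hf' t (interior_subset ht)).sub_half_mul_sq.hasDerivWithinAt)
    (fun t ht => (hf'' t (interior_subset ht)).sub_mul_id.hasDerivWithinAt)
    (fun t ht => sub_nonneg.2 (hc t (interior_subset ht)))

lemma concaveOn_sub_half_mul_sq (hs : Convex ℝ s)
    (hf' : ∀ t ∈ s, HasDerivAt f (f' t) t) (hf'' : ∀ t ∈ s, HasDerivAt f' (f'' t) t)
    (hc : ∀ t ∈ s, f'' t ≤ c) : ConcaveOn ℝ s (fun t => f t - c / 2 * t ^ 2) :=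
  concaveOn_of_hasDerivWithinAt2_nonpos hs
    (fun t ht => (hf' t ht).sub_half_mul_sq.continuousAt.continuousWithinAt)
    (fun t ht => (hf' t (interior_subset ht)).sub_half_mul_sq.hasDerivWithinAt)
    (fun t ht => (hf'' t (interior_subset ht)).sub_mul_id.hasDerivWithinAt)
    (fun t ht => sub_nonpos.2 (hc t (interior_subset ht)))

variable {ι : Type*} [Fintype ι] {w x : ι → ℝ}

lemma half_mul_jensenGap_sq_le_jensenGap (hs : Convex ℝ s)
    (hf' : ∀ t ∈ s, HasDerivAt f (f' t) t) (hf'' : ∀ t ∈ s, HasDerivAt f' (f'' t) t)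
    (hc : ∀ t ∈ s, c ≤ f'' t) (h₀ : ∀ i, 0 ≤ w i) (h₁ : ∑ i, w i = 1) (hx : ∀ i, x i ∈ s) :
    c / 2 * jensenGap w x (· ^ 2) ≤ jensenGap w x f := by
  have := (convexOn_sub_half_mul_sq hs hf' hf'' hc).jensenGap_nonneg h₀ h₁ hx
  rw [jensenGap_sub_const_mul] at this
  linarith

lemma jensenGap_le_half_mul_jensenGap_sq (hs : Convex ℝ s)
    (hf' : ∀ t ∈ s, HasDerivAt f (f' t) t) (hf'' : ∀ t ∈ s, HasDerivAt f' (f'' t) t)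
    (hc : ∀ t ∈ s, f'' t ≤ c) (h₀ : ∀ i, 0 ≤ w i) (h₁ : ∑ i, w i = 1) (hx : ∀ i, x i ∈ s) :
    jensenGap w x f ≤ c / 2 * jensenGap w x (· ^ 2) := by
  have := (concaveOn_sub_half_mul_sq hs hf' hf'' hc).jensenGap_nonpos h₀ h₁ hx
  rw [jensenGap_sub_const_mul] at this
  linarith

end SecondDerivative

theorem jensen_nonconvex_general
    (n : ℕ) (a b m M : ℝ)
    (g g' g'' : ℝ → ℝ)
    (hg' : ∀ t ∈ Set.Icc a b, HasDerivAt g (g' t) t)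
    (hg'' : ∀ t ∈ Set.Icc a b, HasDerivAt g' (g'' t) t)
    (hm : ∀ t ∈ Set.Icc a b, m ≤ g'' t)
    (hM : ∀ t ∈ Set.Icc a b, g'' t ≤ M)
    (p x : Fin n → ℝ)
    (hp : ∀ i, 0 < p i) (hps : ∑ i, p i = 1)
    (hx : ∀ i, x i ∈ Set.Icc a b) :
    (m / 2) * (∑ i, p i * (x i) ^ 2 - (∑ i, p i * x i) ^ 2) ≤
        ∑ i, p i * g (x i) - g (∑ i, p i * x i) ∧
      ∑ i, p i * g (x i) - g (∑ i, p i * x i) ≤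
        (M / 2) * (∑ i, p i * (x i) ^ 2 - (∑ i, p i * x i) ^ 2) :=
  ⟨half_mul_jensenGap_sq_le_jensenGap (convex_Icc a b) hg' hg'' hm (fun i => (hp i).le) hps hx,
    jensenGap_le_half_mul_jensenGap_sq (convex_Icc a b) hg' hg'' hM (fun i => (hp i).le) hps hx⟩

theorem jensen_nonconvex
    (n : ℕ) (a b m M : ℝ) (hab : a ≤ b)
    (g g' g'' : ℝ → ℝ)
    (hg' : ∀ t ∈ Set.Icc a b, HasDerivAt g (g' t) t)
    (hg'' : ∀ t ∈ Set.Icc a b, HasDerivAt g' (g'' t) t)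
    (hgc : ContinuousOn g'' (Set.Icc a b))
    (hm : ∀ t ∈ Set.Icc a b, m ≤ g'' t) (hm' : ∃ t ∈ Set.Icc a b, g'' t = m)
    (hM : ∀ t ∈ Set.Icc a b, g'' t ≤ M) (hM' : ∃ t ∈ Set.Icc a b, g'' t = M)
    (p x : Fin n → ℝ)
    (hp : ∀ i, 0 < p i) (hps : ∑ i, p i = 1)
    (hx : ∀ i, x i ∈ Set.Icc a b) :
    (m / 2) * (∑ i, p i * (x i) ^ 2 - (∑ i, p i * x i) ^ 2) ≤
        ∑ i, p i * g (x i) - g (∑ i, p i * x i) ∧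
      ∑ i, p i * g (x i) - g (∑ i, p i * x i) ≤
        (M / 2) * (∑ i, p i * (x i) ^ 2 - (∑ i, p i * x i) ^ 2) :=
  jensen_nonconvex_general n a b m M g g' g'' hg' hg'' hm hM p x hp hps hx
end

section
/- Let g ∈ C²([a,b]) with m = min g'' and M = max g'' on [a,b]. Then for x_i ∈ [a,b] and positive weights p_i summing to 1: g(a) + g(b) − 2g((a+b)/2) + (M/4)[2 J − (b−a)²] ≤ ∑ p_i g(x_i) − g(∑ p_i x_i) ≤ g(a) + g(b) − 2g((a+b)/2) + (m/4)[2 J − (b−a)²], where J = ∑ p_i x_i² − (∑ p_i x_i)². -/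
/-!
Subtracting `m t² / 2` from `g` leaves a convex function `h`, and the Jensen gap is additive in
the function: the gap of `g` is the gap of `h` plus `m / 2` times the gap `J` of `t²`. For a
convex `h` on `[a, b]` the gap is at most `h a + h b - 2 h ((a + b) / 2)`: by Mercer's inequality
`∑ pᵢ h(xᵢ) ≤ h a + h b - h (a + b - x̄)`, and midpoint convexity gives
`2 h ((a + b) / 2) ≤ h x̄ + h (a + b - x̄)`. The lower bound is the upper bound for `-g`.
-/

open Finset

theorem Set.add_sub_mem_Icc {α : Type*} [AddCommGroup α] [PartialOrder α] [IsOrderedAddMonoid α]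
    {a b y : α} (hy : y ∈ Set.Icc a b) : a + b - y ∈ Set.Icc a b :=
  ⟨by rw [add_sub_assoc]; exact le_add_of_nonneg_right (sub_nonneg.2 hy.2),
    by rw [add_sub_right_comm]; exact add_le_of_nonpos_left (sub_nonpos.2 hy.1)⟩

section ConvexOnIcc

variable {a b : ℝ} {f : ℝ → ℝ}

theorem ConvexOn.map_add_map_reflect_le (hf : ConvexOn ℝ (Set.Icc a b) f) {y : ℝ}
    (hy : y ∈ Set.Icc a b) : f y + f (a + b - y) ≤ f a + f b := by
  have hab : a ≤ b := hy.1.trans hy.2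
  have ha : a ∈ Set.Icc a b := ⟨le_rfl, hab⟩
  have hb : b ∈ Set.Icc a b := ⟨hab, le_rfl⟩
  rw [← segment_eq_Icc hab] at hy
  obtain ⟨θ, η, hθ, hη, hθη, rfl⟩ := hy
  have hreflect : a + b - (θ • a + η • b) = η • a + θ • b := by
    simp only [smul_eq_mul]; linear_combination -(a + b) * hθη
  have hchord := hf.2 ha hb hθ hη hθη
  have hchord' := hf.2 ha hb hη hθ (by rw [add_comm, hθη])
  rw [hreflect]
  simp only [smul_eq_mul] at hchord hchord' ⊢
  linear_combination hchord + hchord' + (f a + f b) * hθη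

variable {ι : Type*} {s : Finset ι} {p x : ι → ℝ}

/-- Mercer's inequality. -/
theorem ConvexOn.map_add_sub_sum_le_s7 (hf : ConvexOn ℝ (Set.Icc a b) f) (hp : ∀ i ∈ s, 0 ≤ p i)
    (hps : ∑ i ∈ s, p i = 1) (hx : ∀ i ∈ s, x i ∈ Set.Icc a b) :
    f (a + b - ∑ i ∈ s, p i * x i) ≤ f a + f b - ∑ i ∈ s, p i * f (x i) := by
  calc f (a + b - ∑ i ∈ s, p i * x i) = f (∑ i ∈ s, p i * (a + b - x i)) := by
        simp only [mul_sub, sum_sub_distrib, ← sum_mul, hps, one_mul]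
    _ ≤ ∑ i ∈ s, p i * f (a + b - x i) := by
        simpa only [smul_eq_mul] using
          hf.map_sum_le hp hps fun i hi => Set.add_sub_mem_Icc (hx i hi)
    _ ≤ ∑ i ∈ s, p i * (f a + f b - f (x i)) := by
        gcongr with i hi
        · exact hp i hi
        · linarith [hf.map_add_map_reflect_le (hx i hi)]
    _ = f a + f b - ∑ i ∈ s, p i * f (x i) := by
        simp only [mul_sub, sum_sub_distrib, ← sum_mul, hps, one_mul]

/-- Simić's converse of Jensen's inequality. -/
theorem ConvexOn.sum_sub_map_sum_le (hf : ConvexOn ℝ (Set.Icc a b) f) (hp : ∀ i ∈ s, 0 ≤ p i)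
    (hps : ∑ i ∈ s, p i = 1) (hx : ∀ i ∈ s, x i ∈ Set.Icc a b) :
    ∑ i ∈ s, p i * f (x i) - f (∑ i ∈ s, p i * x i) ≤ f a + f b - 2 * f ((a + b) / 2) := by
  set μ := ∑ i ∈ s, p i * x i
  have hμ : μ ∈ Set.Icc a b := by
    simpa only [smul_eq_mul] using (convex_Icc a b).sum_mem hp hps hx
  have hhalf : (0 : ℝ) ≤ 1 / 2 := by norm_num
  have hmid := hf.2 hμ (Set.add_sub_mem_Icc hμ) hhalf hhalf (by norm_num)
  rw [show (1 / 2 : ℝ) • μ + (1 / 2 : ℝ) • (a + b - μ) = (a + b) / 2 by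
    simp only [smul_eq_mul]; ring] at hmid
  simp only [smul_eq_mul] at hmid
  linarith [hf.map_add_sub_sum_le_s7 hp hps hx]

end ConvexOnIcc

theorem convexOn_sub_mul_sq_of_le_deriv2 {D : Set ℝ} (hD : Convex ℝ D) {g g' g'' : ℝ → ℝ}
    {m : ℝ} (hg' : ∀ t ∈ D, HasDerivAt g (g' t) t) (hg'' : ∀ t ∈ D, HasDerivAt g' (g'' t) t)
    (hm : ∀ t ∈ D, m ≤ g'' t) : ConvexOn ℝ D (fun t => g t - m / 2 * t ^ 2) := by
  have hder : ∀ t ∈ D, HasDerivAt (fun t => g t - m / 2 * t ^ 2) (g' t - m * t) t :=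
    fun t ht => ((hg' t ht).fun_sub ((hasDerivAt_pow 2 t).const_mul (m / 2))).congr_deriv
      (by push_cast; ring)
  have hder2 : ∀ t ∈ D, HasDerivAt (fun t => g' t - m * t) (g'' t - m) t := fun t ht => by
    simpa using (hg'' t ht).fun_sub ((hasDerivAt_id' t).const_mul m)
  refine convexOn_of_hasDerivWithinAt2_nonneg hD
    (fun t ht => (hder t ht).continuousAt.continuousWithinAt)
    (fun t ht => (hder t (interior_subset ht)).hasDerivWithinAt)
    (fun t ht => (hder2 t (interior_subset ht)).hasDerivWithinAt)
    (fun t ht => sub_nonneg.2 (hm t (interior_subset ht)))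

theorem sum_sub_map_sum_le_of_le_deriv2 {a b m : ℝ} {g g' g'' : ℝ → ℝ}
    (hg' : ∀ t ∈ Set.Icc a b, HasDerivAt g (g' t) t)
    (hg'' : ∀ t ∈ Set.Icc a b, HasDerivAt g' (g'' t) t)
    (hm : ∀ t ∈ Set.Icc a b, m ≤ g'' t) {ι : Type*} {s : Finset ι} {p x : ι → ℝ}
    (hp : ∀ i ∈ s, 0 ≤ p i) (hps : ∑ i ∈ s, p i = 1) (hx : ∀ i ∈ s, x i ∈ Set.Icc a b) :
    ∑ i ∈ s, p i * g (x i) - g (∑ i ∈ s, p i * x i) ≤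
      g a + g b - 2 * g ((a + b) / 2) +
        (m / 4) * (2 * (∑ i ∈ s, p i * x i ^ 2 - (∑ i ∈ s, p i * x i) ^ 2) - (b - a) ^ 2) := by
  have hconvex := (convexOn_sub_mul_sq_of_le_deriv2 (convex_Icc a b) hg' hg'' hm).sum_sub_map_sum_le
    hp hps hx
  have hsplit : ∑ i ∈ s, p i * (g (x i) - m / 2 * x i ^ 2) =
      ∑ i ∈ s, p i * g (x i) - m / 2 * ∑ i ∈ s, p i * x i ^ 2 := by
    rw [mul_sum, ← sum_sub_distrib]
    exact sum_congr rfl fun i _ => by ring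
  rw [hsplit] at hconvex
  linear_combination hconvex

theorem le_sum_sub_map_sum_of_deriv2_le {a b M : ℝ} {g g' g'' : ℝ → ℝ}
    (hg' : ∀ t ∈ Set.Icc a b, HasDerivAt g (g' t) t)
    (hg'' : ∀ t ∈ Set.Icc a b, HasDerivAt g' (g'' t) t)
    (hM : ∀ t ∈ Set.Icc a b, g'' t ≤ M) {ι : Type*} {s : Finset ι} {p x : ι → ℝ}
    (hp : ∀ i ∈ s, 0 ≤ p i) (hps : ∑ i ∈ s, p i = 1) (hx : ∀ i ∈ s, x i ∈ Set.Icc a b) :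
    g a + g b - 2 * g ((a + b) / 2) +
        (M / 4) * (2 * (∑ i ∈ s, p i * x i ^ 2 - (∑ i ∈ s, p i * x i) ^ 2) - (b - a) ^ 2) ≤
      ∑ i ∈ s, p i * g (x i) - g (∑ i ∈ s, p i * x i) := by
  have hneg := sum_sub_map_sum_le_of_le_deriv2 (g := fun t => -g t) (g' := fun t => -g' t)
    (fun t ht => (hg' t ht).neg) (fun t ht => (hg'' t ht).neg)
    (fun t ht => neg_le_neg (hM t ht)) hp hps hx
  simp only [mul_neg, sum_neg_distrib] at hneg
  linarith

theorem jensen_nonconvex_converse_general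
    (n : ℕ) (a b m M : ℝ)
    (g g' g'' : ℝ → ℝ)
    (hg' : ∀ t ∈ Set.Icc a b, HasDerivAt g (g' t) t)
    (hg'' : ∀ t ∈ Set.Icc a b, HasDerivAt g' (g'' t) t)
    (hm : ∀ t ∈ Set.Icc a b, m ≤ g'' t)
    (hM : ∀ t ∈ Set.Icc a b, g'' t ≤ M)
    (p x : Fin n → ℝ)
    (hp : ∀ i, 0 < p i) (hps : ∑ i, p i = 1)
    (hx : ∀ i, x i ∈ Set.Icc a b) :
    g a + g b - 2 * g ((a + b) / 2) +
        (M / 4) * (2 * (∑ i, p i * (x i) ^ 2 - (∑ i, p i * x i) ^ 2) - (b - a) ^ 2) ≤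
        ∑ i, p i * g (x i) - g (∑ i, p i * x i) ∧
      ∑ i, p i * g (x i) - g (∑ i, p i * x i) ≤
        g a + g b - 2 * g ((a + b) / 2) +
          (m / 4) * (2 * (∑ i, p i * (x i) ^ 2 - (∑ i, p i * x i) ^ 2) - (b - a) ^ 2) := by
  have hp₀ : ∀ i ∈ univ, 0 ≤ p i := fun i _ => (hp i).le
  have hx' : ∀ i ∈ univ, x i ∈ Set.Icc a b := fun i _ => hx i
  exact ⟨le_sum_sub_map_sum_of_deriv2_le hg' hg'' hM hp₀ hps hx',
    sum_sub_map_sum_le_of_le_deriv2 hg' hg'' hm hp₀ hps hx'⟩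

theorem jensen_nonconvex_converse
    (n : ℕ) (a b m M : ℝ) (hab : a ≤ b)
    (g g' g'' : ℝ → ℝ)
    (hg' : ∀ t ∈ Set.Icc a b, HasDerivAt g (g' t) t)
    (hg'' : ∀ t ∈ Set.Icc a b, HasDerivAt g' (g'' t) t)
    (hgc : ContinuousOn g'' (Set.Icc a b))
    (hm : ∀ t ∈ Set.Icc a b, m ≤ g'' t) (hm' : ∃ t ∈ Set.Icc a b, g'' t = m)
    (hM : ∀ t ∈ Set.Icc a b, g'' t ≤ M) (hM' : ∃ t ∈ Set.Icc a b, g'' t = M)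
    (p x : Fin n → ℝ)
    (hp : ∀ i, 0 < p i) (hps : ∑ i, p i = 1)
    (hx : ∀ i, x i ∈ Set.Icc a b) :
    g a + g b - 2 * g ((a + b) / 2) +
        (M / 4) * (2 * (∑ i, p i * (x i) ^ 2 - (∑ i, p i * x i) ^ 2) - (b - a) ^ 2) ≤
        ∑ i, p i * g (x i) - g (∑ i, p i * x i) ∧
      ∑ i, p i * g (x i) - g (∑ i, p i * x i) ≤
        g a + g b - 2 * g ((a + b) / 2) +
          (m / 4) * (2 * (∑ i, p i * (x i) ^ 2 - (∑ i, p i * x i) ^ 2) - (b - a) ^ 2) :=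
  jensen_nonconvex_converse_general n a b m M g g' g'' hg' hg'' hm hM p x hp hps hx
end

section
/- Let f ∈ C²([a,b]) be convex with m = min f'' > 0 and M = max f'' on [a,b]. Then for x_i ∈ [a,b] and positive weights p_i summing to 1, the Jensen functional ∑ p_i f(x_i) − f(∑ p_i x_i) is at most (M/(m+M))[f(a)+f(b)−2f((a+b)/2)] + (mM/(m+M))(J − (b−a)²/4), where J = ∑ p_i x_i² − (∑ p_i x_i)². -/
/-!
Write `J(g) = ∑ pᵢ g(xᵢ) - g(∑ pᵢ xᵢ)` for the Jensen functional, which is linear in `g`.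
Since `m ≤ f'' ≤ M`, both `f - m t²/2` and `M t²/2 - f` are convex on `[a, b]`. Jensen's
inequality for the second gives `J(f) ≤ (M/2) J(t²)`, and Simić's bound
`J(g) ≤ g(a) + g(b) - 2 g((a+b)/2)` for the first gives
`J(f) - (m/2) J(t²) ≤ f(a) + f(b) - 2 f((a+b)/2) - m (b-a)²/4`.
Adding `m` times the first inequality to `M` times the second gives the claim.
Simić's bound itself comes from the chord bound `(b - a) g(x) ≤ (b - x) g(a) + (x - a) g(b)`,
applied to the `xᵢ` and to the reflection `a + b - x̄` of the mean `x̄`, together with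
midpoint convexity `2 g((a+b)/2) ≤ g(x̄) + g(a + b - x̄)`.
-/

open Set Finset

theorem ConvexOn.mul_le_chord {𝕜 : Type*} [Field 𝕜] [LinearOrder 𝕜] [IsStrictOrderedRing 𝕜]
    {D : Set 𝕜} {g : 𝕜 → 𝕜} (hg : ConvexOn 𝕜 D g) {a b t : 𝕜}
    (ha : a ∈ D) (hb : b ∈ D) (hat : a ≤ t) (htb : t ≤ b) :
    (b - a) * g t ≤ (b - t) * g a + (t - a) * g b := by
  rcases hat.eq_or_lt with rfl | hat
  · ring_nf; rfl
  rcases htb.eq_or_lt with rfl | htb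
  · ring_nf; rfl
  exact hg.secant_mono_aux1 ha hb hat htb

section JensenFunctional

variable {ι : Type*} (s : Finset ι) (p x : ι → ℝ)

def jensenFunctional (g : ℝ → ℝ) : ℝ :=
  ∑ i ∈ s, p i * g (x i) - g (∑ i ∈ s, p i * x i)

theorem jensenFunctional_sub (f g : ℝ → ℝ) :
    jensenFunctional s p x (fun t => f t - g t) =
      jensenFunctional s p x f - jensenFunctional s p x g := by
  simp only [jensenFunctional, mul_sub, sum_sub_distrib]
  ring

theorem jensenFunctional_const_mul (c : ℝ) (g : ℝ → ℝ) :
    jensenFunctional s p x (fun t => c * g t) = c * jensenFunctional s p x g := by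
  simp only [jensenFunctional, mul_left_comm (p _) c, ← mul_sum]
  ring

variable {s p x} {g : ℝ → ℝ}

theorem ConvexOn.jensenFunctional_nonneg {D : Set ℝ} (hg : ConvexOn ℝ D g)
    (hp : ∀ i ∈ s, 0 ≤ p i) (hps : ∑ i ∈ s, p i = 1) (hx : ∀ i ∈ s, x i ∈ D) :
    0 ≤ jensenFunctional s p x g :=
  sub_nonneg.2 (hg.map_sum_le hp hps hx)

variable {a b : ℝ}

theorem ConvexOn.mul_sum_le_chord (hg : ConvexOn ℝ (Icc a b) g) (hp : ∀ i ∈ s, 0 ≤ p i)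
    (hps : ∑ i ∈ s, p i = 1) (hx : ∀ i ∈ s, x i ∈ Icc a b) :
    (b - a) * ∑ i ∈ s, p i * g (x i) ≤
      (b - ∑ i ∈ s, p i * x i) * g a + (∑ i ∈ s, p i * x i - a) * g b :=
  calc (b - a) * ∑ i ∈ s, p i * g (x i) = ∑ i ∈ s, p i * ((b - a) * g (x i)) := by
        rw [mul_sum]; exact sum_congr rfl fun i _ => by ring
    _ ≤ ∑ i ∈ s, p i * ((b - x i) * g a + (x i - a) * g b) := by
        gcongr with i hi
        · exact hp i hi
        have ⟨hax, hxb⟩ := hx i hi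
        exact hg.mul_le_chord ⟨le_rfl, hax.trans hxb⟩ ⟨hax.trans hxb, le_rfl⟩ hax hxb
    _ = (b - ∑ i ∈ s, p i * x i) * g a + (∑ i ∈ s, p i * x i - a) * g b := by
        simp only [mul_add, mul_sub, ← mul_assoc, sum_add_distrib, sum_sub_distrib, ← sum_mul,
          hps, mul_comm _ b, mul_comm _ a, ← mul_sum, mul_one]

theorem ConvexOn.jensenFunctional_le_simic (hab : a < b) (hg : ConvexOn ℝ (Icc a b) g)
    (hp : ∀ i ∈ s, 0 ≤ p i) (hps : ∑ i ∈ s, p i = 1) (hx : ∀ i ∈ s, x i ∈ Icc a b) :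
    jensenFunctional s p x g ≤ g a + g b - 2 * g ((a + b) / 2) := by
  set xbar := ∑ i ∈ s, p i * x i
  have ha : a ∈ Icc a b := left_mem_Icc.2 hab.le
  have hb : b ∈ Icc a b := right_mem_Icc.2 hab.le
  have hxbar : xbar ∈ Icc a b := (convex_Icc a b).sum_mem hp hps hx
  have hreflect : a + b - xbar ∈ Icc a b := ⟨by linarith [hxbar.2], by linarith [hxbar.1]⟩
  have hsum := hg.mul_sum_le_chord hp hps hx
  have hchord : (b - a) * g (a + b - xbar) ≤ (xbar - a) * g a + (b - xbar) * g b := by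
    linear_combination hg.mul_le_chord ha hb hreflect.1 hreflect.2
  have hmid : 2 * g ((a + b) / 2) ≤ g xbar + g (a + b - xbar) := by
    have h := hg.2 hxbar hreflect (by norm_num : (0 : ℝ) ≤ 1 / 2)
      (by norm_num : (0 : ℝ) ≤ 1 / 2) (by norm_num)
    simp only [smul_eq_mul] at h
    rw [show (a + b) / 2 = 1 / 2 * xbar + 1 / 2 * (a + b - xbar) by ring]
    linarith
  refine le_of_mul_le_mul_left ?_ (sub_pos.2 hab)
  unfold jensenFunctional
  linear_combination hsum + hchord + (b - a) * hmid

end JensenFunctional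

theorem convexOn_sub_of_hasDerivAt2_le {D : Set ℝ} (hD : Convex ℝ D)
    {f f' f'' g g' g'' : ℝ → ℝ}
    (hf' : ∀ t ∈ D, HasDerivAt f (f' t) t) (hf'' : ∀ t ∈ D, HasDerivAt f' (f'' t) t)
    (hg' : ∀ t ∈ D, HasDerivAt g (g' t) t) (hg'' : ∀ t ∈ D, HasDerivAt g' (g'' t) t)
    (hle : ∀ t ∈ D, g'' t ≤ f'' t) :
    ConvexOn ℝ D (fun t => f t - g t) :=
  convexOn_of_hasDerivWithinAt2_nonneg hD
    (fun t ht => ((hf' t ht).sub (hg' t ht)).continuousAt.continuousWithinAt)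
    (fun t ht => ((hf' t (interior_subset ht)).sub (hg' t (interior_subset ht))).hasDerivWithinAt)
    (fun t ht => ((hf'' t (interior_subset ht)).sub (hg'' t (interior_subset ht))).hasDerivWithinAt)
    (fun t ht => sub_nonneg.2 (hle t (interior_subset ht)))

theorem hasDerivAt_half_mul_sq (c t : ℝ) : HasDerivAt (fun u => c / 2 * u ^ 2) (c * t) t :=
  ((hasDerivAt_pow 2 t).const_mul (c / 2)).congr_deriv (by push_cast; ring)

theorem jensen_two_sided_improvement_upper_general
    (n : ℕ) (a b m M : ℝ) (hab : a < b)
    (f f' f'' : ℝ → ℝ)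
    (hf' : ∀ t ∈ Set.Icc a b, HasDerivAt f (f' t) t)
    (hf'' : ∀ t ∈ Set.Icc a b, HasDerivAt f' (f'' t) t)
    (hm : ∀ t ∈ Set.Icc a b, m ≤ f'' t)
    (hM : ∀ t ∈ Set.Icc a b, f'' t ≤ M)
    (hmpos : 0 < m)
    (p x : Fin n → ℝ)
    (hp : ∀ i, 0 < p i) (hps : ∑ i, p i = 1)
    (hx : ∀ i, x i ∈ Set.Icc a b) :
    ∑ i, p i * f (x i) - f (∑ i, p i * x i) ≤
      (M / (m + M)) * (f a + f b - 2 * f ((a + b) / 2)) +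
        (m * M / (m + M)) *
          ((∑ i, p i * (x i) ^ 2 - (∑ i, p i * x i) ^ 2) - (b - a) ^ 2 / 4) := by
  have ha : a ∈ Icc a b := left_mem_Icc.2 hab.le
  have hMpos : 0 < M := hmpos.trans_le ((hm a ha).trans (hM a ha))
  have hquad (c : ℝ) : ∀ t ∈ Icc a b, HasDerivAt (fun u => c / 2 * u ^ 2) (c * t) t :=
    fun t _ => hasDerivAt_half_mul_sq c t
  have hlin (c : ℝ) : ∀ t ∈ Icc a b, HasDerivAt (fun u => c * u) c t :=
    fun _ _ => hasDerivAt_const_mul c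
  have hlower : ConvexOn ℝ (Icc a b) (fun t => f t - m / 2 * t ^ 2) :=
    convexOn_sub_of_hasDerivAt2_le (convex_Icc a b) hf' hf'' (hquad m) (hlin m) hm
  have hupper : ConvexOn ℝ (Icc a b) (fun t => M / 2 * t ^ 2 - f t) :=
    convexOn_sub_of_hasDerivAt2_le (convex_Icc a b) (hquad M) (hlin M) hf' hf'' hM
  have hp₀ : ∀ i ∈ Finset.univ, 0 ≤ p i := fun i _ => (hp i).le
  have hx' : ∀ i ∈ Finset.univ, x i ∈ Icc a b := fun i _ => hx i
  have simic := hlower.jensenFunctional_le_simic hab hp₀ hps hx'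
  have jensen := hupper.jensenFunctional_nonneg hp₀ hps hx'
  rw [jensenFunctional_sub, jensenFunctional_const_mul] at simic jensen
  change jensenFunctional Finset.univ p x f ≤
    _ * _ + _ * (jensenFunctional Finset.univ p x (· ^ 2) - _)
  rw [div_mul_eq_mul_div, div_mul_eq_mul_div, ← add_div,
    le_div_iff₀ (add_pos hmpos hMpos)]
  linear_combination M * simic + m * jensen

theorem jensen_two_sided_improvement_upper
    (n : ℕ) (a b m M : ℝ) (hab : a < b)
    (f f' f'' : ℝ → ℝ)
    (hf : ConvexOn ℝ (Set.Icc a b) f)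
    (hf' : ∀ t ∈ Set.Icc a b, HasDerivAt f (f' t) t)
    (hf'' : ∀ t ∈ Set.Icc a b, HasDerivAt f' (f'' t) t)
    (hfc : ContinuousOn f'' (Set.Icc a b))
    (hm : ∀ t ∈ Set.Icc a b, m ≤ f'' t) (hm' : ∃ t ∈ Set.Icc a b, f'' t = m)
    (hM : ∀ t ∈ Set.Icc a b, f'' t ≤ M) (hM' : ∃ t ∈ Set.Icc a b, f'' t = M)
    (hmpos : 0 < m)
    (p x : Fin n → ℝ)
    (hp : ∀ i, 0 < p i) (hps : ∑ i, p i = 1)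
    (hx : ∀ i, x i ∈ Set.Icc a b) :
    ∑ i, p i * f (x i) - f (∑ i, p i * x i) ≤
      (M / (m + M)) * (f a + f b - 2 * f ((a + b) / 2)) +
        (m * M / (m + M)) *
          ((∑ i, p i * (x i) ^ 2 - (∑ i, p i * x i) ^ 2) - (b - a) ^ 2 / 4) :=
  jensen_two_sided_improvement_upper_general n a b m M hab f f' f'' hf' hf'' hm hM hmpos p x hp hps
    hx
end

section
/- Let 0 < a ≤ x_i ≤ b for i = 1,...,n and let w_i > 0 with ∑ w_i = 1. Then 1 ≤ (∑ w_i x_i) / (∏ x_i^{w_i}) ≤ (a+b)²/(4ab). -/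
theorem AG_ratio_bounds
    (n : ℕ) (a b : ℝ) (ha : 0 < a) (hab : a ≤ b)
    (w x : Fin n → ℝ)
    (hw : ∀ i, 0 < w i) (hws : ∑ i, w i = 1)
    (hx : ∀ i, x i ∈ Set.Icc a b) :
    1 ≤ (∑ i, w i * x i) / (∏ i, x i ^ w i) ∧
      (∑ i, w i * x i) / (∏ i, x i ^ w i) ≤ (a + b) ^ 2 / (4 * a * b) := by
  have hx' : ∀ i, 0 < x i := fun i => lt_of_lt_of_le ha (hx i).1
  have hG : 0 < ∏ i, x i ^ w i :=
    Finset.prod_pos fun i _ => Real.rpow_pos_of_pos (hx' i) _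
  have hAM : ∏ i, x i ^ w i ≤ ∑ i, w i * x i :=
    Real.geom_mean_le_arith_mean_weighted _ _ _ (fun i _ => (hw i).le)
      hws (fun i _ => (hx' i).le)
  constructor
  · rw [le_div_iff₀ hG]; simpa using hAM
  · -- harmonic mean bound: 1/G ≤ ∑ w/x
    have hHM : (∏ i, x i ^ w i)⁻¹ ≤ ∑ i, w i * (x i)⁻¹ := by
      have := Real.geom_mean_le_arith_mean_weighted Finset.univ w (fun i => (x i)⁻¹)
        (fun i _ => (hw i).le) hws (fun i _ => (inv_pos.2 (hx' i)).le)
      calc (∏ i, x i ^ w i)⁻¹ = ∏ i, (x i)⁻¹ ^ w i := by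
            rw [← Finset.prod_inv_distrib]
            exact Finset.prod_congr rfl fun i _ =>
              (Real.inv_rpow (hx' i).le _).symm
        _ ≤ _ := this
    set A := ∑ i, w i * x i with hA
    set T := ∑ i, w i * (x i)⁻¹ with hT
    have hA0 : 0 < A := lt_of_lt_of_le hG hAM
    have hT0 : 0 ≤ T := Finset.sum_nonneg fun i _ =>
      mul_nonneg (hw i).le (inv_pos.2 (hx' i)).le
    -- Kantorovich: A + a*b*T ≤ a + b
    have hkey : A + a * b * T ≤ a + b := by
      have : ∑ i, w i * (x i + a * b * (x i)⁻¹) ≤ ∑ i, w i * (a + b) := by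
        apply Finset.sum_le_sum
        intro i _
        have h1 := (hx i).1
        have h2 := (hx i).2
        have hxi := hx' i
        have hinv : (x i)⁻¹ * x i = 1 := inv_mul_cancel₀ hxi.ne'
        have hq : a * b ≤ (a + b - x i) * x i := by nlinarith
        have hd : a * b * (x i)⁻¹ ≤ a + b - x i := by
          rw [mul_inv_le_iff₀ hxi]; linarith
        exact mul_le_mul_of_nonneg_left (by linarith) (hw i).le
      have hsum : ∑ i, w i * (a + b) = a + b := by
        rw [← Finset.sum_mul, hws, one_mul]
      have heq : A + a * b * T = ∑ i, w i * (x i + a * b * (x i)⁻¹) := by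
        rw [hA, hT, Finset.mul_sum, ← Finset.sum_add_distrib]
        exact Finset.sum_congr rfl fun i _ => by ring
      linarith [this.trans_eq hsum, heq.le, heq.ge]

    have hab0 : 0 < a * b := mul_pos ha (lt_of_lt_of_le ha hab)
    have hAT : A * T ≤ (a + b) ^ 2 / (4 * a * b) := by
      rw [le_div_iff₀ (by linarith : (0:ℝ) < 4 * a * b)]
      nlinarith [sq_nonneg (2 * A - (a + b)), sq_nonneg (A - (a+b)/2)]
    calc A / (∏ i, x i ^ w i) = A * (∏ i, x i ^ w i)⁻¹ := div_eq_mul_inv _ _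
      _ ≤ A * T := mul_le_mul_of_nonneg_left hHM hA0.le
      _ ≤ _ := hAT
end

section
/- Let 0 < a ≤ x_i ≤ b and w_i > 0 with ∑ w_i = 1. Then 1 ≤ (∏ x_i^{w_i}) · (∑ w_i / x_i) ≤ (a+b)²/(4ab), i.e., the ratio of the weighted geometric mean to the weighted harmonic mean lies between 1 and (a+b)²/(4ab). -/
theorem GH_ratio_bounds
    (n : ℕ) (a b : ℝ) (ha : 0 < a) (hab : a ≤ b)
    (w x : Fin n → ℝ)
    (hw : ∀ i, 0 < w i) (hws : ∑ i, w i = 1)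
    (hx : ∀ i, x i ∈ Set.Icc a b) :
    1 ≤ (∏ i, x i ^ w i) * (∑ i, w i / x i) ∧
      (∏ i, x i ^ w i) * (∑ i, w i / x i) ≤ (a + b) ^ 2 / (4 * a * b) := by
  rcases Nat.eq_zero_or_pos n with rfl | hn
  · simp at hws
  have hne : (Finset.univ : Finset (Fin n)).Nonempty :=
    ⟨⟨0, hn⟩, Finset.mem_univ _⟩
  have hb : 0 < b := lt_of_lt_of_le ha hab
  have hxpos : ∀ i, 0 < x i := fun i => lt_of_lt_of_le ha (hx i).1
  have hP : 0 < ∏ i, x i ^ w i :=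
    Finset.prod_pos fun i _ => Real.rpow_pos_of_pos (hxpos i) _
  have hH : 0 < ∑ i, w i / x i :=
    Finset.sum_pos (fun i _ => div_pos (hw i) (hxpos i)) hne
  have hS : 0 < ∑ i, w i * x i :=
    Finset.sum_pos (fun i _ => mul_pos (hw i) (hxpos i)) hne
  constructor
  · have h := Real.harm_mean_le_geom_mean_weighted Finset.univ w x hne
      (fun i _ => hw i) hws (fun i _ => hxpos i)
    rw [inv_le_iff_one_le_mul₀ hH] at h
    linarith [h]
  · -- GM ≤ AM
    have hGA : (∏ i, x i ^ w i) ≤ ∑ i, w i * x i :=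
      Real.geom_mean_le_arith_mean_weighted Finset.univ w x
        (fun i _ => (hw i).le) hws (fun i _ => (hxpos i).le)
    -- 1/x ≤ (a+b-x)/(ab)
    have hHb : (∑ i, w i / x i) ≤ (a + b - ∑ i, w i * x i) / (a * b) := by
      have : (∑ i, w i / x i) ≤ ∑ i, w i * ((a + b - x i) / (a * b)) := by
        apply Finset.sum_le_sum
        intro i _
        rw [div_eq_mul_inv]
        apply mul_le_mul_of_nonneg_left _ (hw i).le
        have h1 := (hx i).1
        have h2 := (hx i).2
        rw [inv_le_iff_one_le_mul₀ (hxpos i), div_mul_eq_mul_div,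
          le_div_iff₀ (mul_pos ha hb)]
        nlinarith [mul_nonneg (sub_nonneg.2 h1) (sub_nonneg.2 h2)]
      calc (∑ i, w i / x i) ≤ ∑ i, w i * ((a + b - x i) / (a * b)) := this
        _ = (a + b - ∑ i, w i * x i) / (a * b) := by
            simp only [mul_div_assoc']
            rw [← Finset.sum_div]
            congr 1
            simp only [mul_sub, Finset.sum_sub_distrib, ← Finset.sum_mul]
            rw [hws, one_mul]
    have hab4 : 0 < 4 * a * b := by positivity
    have key : (∑ i, w i * x i) * ((a + b - ∑ i, w i * x i) / (a * b)) ≤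
        (a + b) ^ 2 / (4 * a * b) := by
      rw [mul_div_assoc', div_le_div_iff₀ (mul_pos ha hb) hab4]
      nlinarith [sq_nonneg (a + b - 2 * ∑ i, w i * x i)]
    calc (∏ i, x i ^ w i) * (∑ i, w i / x i)
        ≤ (∑ i, w i * x i) * ((a + b - ∑ i, w i * x i) / (a * b)) := by
          apply mul_le_mul hGA hHb hH.le hS.le
      _ ≤ (a + b) ^ 2 / (4 * a * b) := key
end

section
/- Let 0 < a ≤ x_i ≤ b and w_i > 0 with ∑ w_i = 1. Then 0 ≤ ∑ w_i x_i − ∏ x_i^{w_i} ≤ (√b − √a)². -/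
/-!
The lower bound is the weighted AM-GM inequality. For the upper bound, the geometric mean
dominates the harmonic mean `H = (∑ wᵢ / xᵢ)⁻¹`, so it suffices to bound `A - H`, where `A` is the
arithmetic mean. Since `(xᵢ - a)(xᵢ - b) ≤ 0` gives `xᵢ + ab / xᵢ ≤ a + b`, averaging yields
`A + ab / H ≤ a + b`, and then `A - H ≤ a + b - (ab / H + H) ≤ a + b - 2√(ab) = (√b - √a)²`.
-/

open Finset Real

lemma add_mul_div_le_add_of_mem_Icc {a b x : ℝ} (hx0 : 0 < x) (hx : x ∈ Set.Icc a b) :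
    x + a * b / x ≤ a + b := by
  have h : a * b / x ≤ a + b - x := by
    rw [div_le_iff₀ hx0]
    nlinarith [hx.1, hx.2]
  linarith

lemma weighted_sum_add_mul_sum_div_le {ι : Type*} (s : Finset ι) {a b : ℝ} (w x : ι → ℝ)
    (hw : ∀ i ∈ s, 0 ≤ w i) (hws : ∑ i ∈ s, w i = 1) (hx0 : ∀ i ∈ s, 0 < x i)
    (hx : ∀ i ∈ s, x i ∈ Set.Icc a b) :
    ∑ i ∈ s, w i * x i + a * b * ∑ i ∈ s, w i / x i ≤ a + b :=
  calc ∑ i ∈ s, w i * x i + a * b * ∑ i ∈ s, w i / x i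
      = ∑ i ∈ s, w i * (x i + a * b / x i) := by
        rw [mul_sum, ← sum_add_distrib]
        exact sum_congr rfl fun i _ => by ring
    _ ≤ ∑ i ∈ s, w i * (a + b) :=
        sum_le_sum fun i hi =>
          mul_le_mul_of_nonneg_left (add_mul_div_le_add_of_mem_Icc (hx0 i hi) (hx i hi)) (hw i hi)
    _ = a + b := by rw [← sum_mul, hws, one_mul]

lemma two_mul_sqrt_le_mul_add_inv {c t : ℝ} (hc : 0 ≤ c) (ht : 0 < t) :
    2 * √c ≤ c * t + t⁻¹ := by
  have hsq : √c ^ 2 = c := sq_sqrt hc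
  have hsplit : c * t + t⁻¹ - 2 * √c = (√c * t - 1) ^ 2 / t := by
    field_simp
    linear_combination -t ^ 2 * hsq
  have := div_nonneg (sq_nonneg (√c * t - 1)) ht.le
  linarith

lemma sqrt_sub_sqrt_sq {a b : ℝ} (ha : 0 ≤ a) (hb : 0 ≤ b) :
    (√b - √a) ^ 2 = a + b - 2 * √(a * b) := by
  rw [sub_sq, sq_sqrt hb, sq_sqrt ha, sqrt_mul ha]
  ring

lemma weighted_arith_mean_sub_harm_mean_le {ι : Type*} (s : Finset ι) {a b : ℝ} (w x : ι → ℝ)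
    (ha : 0 < a) (hw : ∀ i ∈ s, 0 < w i) (hws : ∑ i ∈ s, w i = 1)
    (hx : ∀ i ∈ s, x i ∈ Set.Icc a b) :
    ∑ i ∈ s, w i * x i - (∑ i ∈ s, w i / x i)⁻¹ ≤ (√b - √a) ^ 2 := by
  obtain ⟨j, hj⟩ := nonempty_of_sum_ne_zero (hws.trans_ne one_ne_zero)
  have hx0 : ∀ i ∈ s, 0 < x i := fun i hi => ha.trans_le (hx i hi).1
  have hS : 0 < ∑ i ∈ s, w i / x i :=
    sum_pos (fun i hi => div_pos (hw i hi) (hx0 i hi)) ⟨j, hj⟩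
  have hb : 0 ≤ b := (hx0 j hj).le.trans (hx j hj).2
  have hmean := weighted_sum_add_mul_sum_div_le s w x (fun i hi => (hw i hi).le) hws hx0 hx
  have hamgm := two_mul_sqrt_le_mul_add_inv (mul_nonneg ha.le hb) hS
  rw [sqrt_sub_sqrt_sq ha.le hb]
  linarith

theorem AG_difference_bound_general
    (n : ℕ) (a b : ℝ) (ha : 0 < a)
    (w x : Fin n → ℝ)
    (hw : ∀ i, 0 < w i) (hws : ∑ i, w i = 1)
    (hx : ∀ i, x i ∈ Set.Icc a b) :
    0 ≤ ∑ i, w i * x i - ∏ i, x i ^ w i ∧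
      ∑ i, w i * x i - ∏ i, x i ^ w i ≤ (Real.sqrt b - Real.sqrt a) ^ 2 := by
  have hx0 : ∀ i ∈ univ, 0 < x i := fun i _ => ha.trans_le (hx i).1
  have hne : (univ : Finset (Fin n)).Nonempty := nonempty_of_sum_ne_zero (hws.trans_ne one_ne_zero)
  refine ⟨sub_nonneg.2 <| geom_mean_le_arith_mean_weighted univ w x (fun i _ => (hw i).le) hws
    fun i hi => (hx0 i hi).le, ?_⟩
  calc ∑ i, w i * x i - ∏ i, x i ^ w i
      ≤ ∑ i, w i * x i - (∑ i, w i / x i)⁻¹ := by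
        gcongr
        exact harm_mean_le_geom_mean_weighted univ w x hne (fun i _ => hw i) hws hx0
    _ ≤ (√b - √a) ^ 2 :=
        weighted_arith_mean_sub_harm_mean_le univ w x ha (fun i _ => hw i) hws fun i _ => hx i

theorem AG_difference_bound
    (n : ℕ) (a b : ℝ) (ha : 0 < a) (hab : a ≤ b)
    (w x : Fin n → ℝ)
    (hw : ∀ i, 0 < w i) (hws : ∑ i, w i = 1)
    (hx : ∀ i, x i ∈ Set.Icc a b) :
    0 ≤ ∑ i, w i * x i - ∏ i, x i ^ w i ∧
      ∑ i, w i * x i - ∏ i, x i ^ w i ≤ (Real.sqrt b - Real.sqrt a) ^ 2 :=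
  AG_difference_bound_general n a b ha w x hw hws hx
end

section
/- Let 0 < a ≤ x_i ≤ b and w_i > 0 with ∑ w_i = 1. Then 0 ≤ ∑ w_i x_i − (∑ w_i / x_i)^{−1} ≤ (√b − √a)². -/
theorem AH_difference_bound
    (n : ℕ) (a b : ℝ) (ha : 0 < a) (hab : a ≤ b)
    (w x : Fin n → ℝ)
    (hw : ∀ i, 0 < w i) (hws : ∑ i, w i = 1)
    (hx : ∀ i, x i ∈ Set.Icc a b) :
    0 ≤ ∑ i, w i * x i - (∑ i, w i / x i)⁻¹ ∧
      ∑ i, w i * x i - (∑ i, w i / x i)⁻¹ ≤ (Real.sqrt b - Real.sqrt a) ^ 2 := by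
  have hn : n ≠ 0 := by
    rintro rfl
    simp at hws
  have hxpos : ∀ i, 0 < x i := fun i => lt_of_lt_of_le ha (hx i).1
  set A := ∑ i, w i * x i with hA
  set S := ∑ i, w i / x i with hS
  have hSpos : 0 < S := by
    apply Finset.sum_pos
    · intro i _
      exact div_pos (hw i) (hxpos i)
    · exact Finset.univ_nonempty_iff.mpr (Fin.pos_iff_nonempty.mp (Nat.pos_of_ne_zero hn))
  -- Cauchy-Schwarz: 1 = (∑ w)^2 ≤ A * S
  have hCS : 1 ≤ A * S := by
    have h := Finset.sum_mul_sq_le_sq_mul_sq Finset.univ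
      (fun i => Real.sqrt (w i * x i)) (fun i => Real.sqrt (w i / x i))
    have h1 : ∀ i : Fin n, Real.sqrt (w i * x i) * Real.sqrt (w i / x i) = w i := by
      intro i
      rw [← Real.sqrt_mul (mul_pos (hw i) (hxpos i)).le]
      have : w i * x i * (w i / x i) = w i ^ 2 := by
        field_simp [(hxpos i).ne']
      rw [this, Real.sqrt_sq (hw i).le]
    have h2 : ∀ i : Fin n, Real.sqrt (w i * x i) ^ 2 = w i * x i := by
      intro i; exact Real.sq_sqrt (mul_pos (hw i) (hxpos i)).le
    have h3 : ∀ i : Fin n, Real.sqrt (w i / x i) ^ 2 = w i / x i := by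
      intro i; exact Real.sq_sqrt (div_pos (hw i) (hxpos i)).le
    simp only [h1, h2, h3] at h
    rw [hws] at h
    simpa using h
  have hlow : (S)⁻¹ ≤ A := by
    rw [inv_le_iff_one_le_mul₀ hSpos]
    linarith [hCS]
  constructor
  · linarith
  · -- key pointwise estimate: x + ab/x ≤ a + b
    have hkey : A + a * b * S ≤ a + b := by
      have : A + a * b * S = ∑ i, w i * (x i + a * b / x i) := by
        rw [hA, hS, Finset.mul_sum, ← Finset.sum_add_distrib]
        apply Finset.sum_congr rfl
        intro i _
        field_simp
      rw [this]
      calc ∑ i, w i * (x i + a * b / x i) ≤ ∑ i, w i * (a + b) := by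
            apply Finset.sum_le_sum
            intro i _
            apply mul_le_mul_of_nonneg_left _ (hw i).le
            have hxi := hxpos i
            have h1 := (hx i).1
            have h2 := (hx i).2
            have hd : a * b / x i ≤ a + b - x i := by
              rw [div_le_iff₀ hxi]
              nlinarith [mul_nonneg (sub_nonneg.mpr h1) (sub_nonneg.mpr h2)]
            linarith
        _ = a + b := by rw [← Finset.sum_mul, hws, one_mul]
    have hab' : 0 ≤ a * b := mul_nonneg ha.le (ha.le.trans hab)
    have hsq : Real.sqrt (a * b) ^ 2 = a * b := Real.sq_sqrt hab'
    have hamgm : 2 * Real.sqrt (a * b) ≤ a * b * S + S⁻¹ := by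
      have hinv : S * S⁻¹ = 1 := mul_inv_cancel₀ hSpos.ne'
      nlinarith [sq_nonneg (Real.sqrt (a * b) * S - 1), hSpos, hsq,
        mul_pos hSpos hSpos]
    have hexp : (Real.sqrt b - Real.sqrt a) ^ 2 = a + b - 2 * Real.sqrt (a * b) := by
      have hsab : Real.sqrt (a * b) = Real.sqrt a * Real.sqrt b := Real.sqrt_mul ha.le b
      have ha2 : Real.sqrt a ^ 2 = a := Real.sq_sqrt ha.le
      have hb2 : Real.sqrt b ^ 2 = b := Real.sq_sqrt (ha.le.trans hab)
      rw [hsab]; nlinarith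
    rw [hexp]
    linarith
end

section
/- Let 0 < a ≤ x_i ≤ b ≤ 1/2 and w_i > 0 with ∑ w_i = 1. Set J = ∑ w_i x_i² − (∑ w_i x_i)². Then exp( (1/2 − b)/(b(1−b))² · J ) · ∏ (x_i/(1−x_i))^{w_i} ≤ (∑ w_i x_i)/(∑ w_i (1−x_i)) ≤ exp( (1/2 − a)/(a(1−a))² · J ) · ∏ (x_i/(1−x_i))^{w_i}. -/
/-!
If `m ≤ f'' ≤ M` on an interval, then `f - m x² / 2` and `M x² / 2 - f` are convex there, so
Jensen's inequality for these two functions traps the Jensen gap `f (∑ wᵢ xᵢ) - ∑ wᵢ f xᵢ`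
between `-M J / 2` and `-m J / 2`, where `J` is the weighted variance of the `xᵢ`.
Apply this to `logit t = log (t / (1 - t))`, whose second derivative
`-2 (1/2 - t) / (t (1 - t))²` is increasing on `(0, 1/2]`, with `m = logit'' a` and
`M = logit'' b`, and exponentiate.
-/

open Finset Real

section SecondDerivativeBounds

variable {s : Set ℝ} {f f' f'' : ℝ → ℝ}

theorem convexOn_sub_half_mul_sq_of_le_deriv2 (hs : Convex ℝ s)
    (hf : ∀ x ∈ s, HasDerivAt f (f' x) x) (hf' : ∀ x ∈ s, HasDerivAt f' (f'' x) x)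
    {m : ℝ} (hm : ∀ x ∈ s, m ≤ f'' x) :
    ConvexOn ℝ s (fun x => f x - m / 2 * x ^ 2) := by
  have hsq (x : ℝ) : HasDerivAt (fun x => m / 2 * x ^ 2) (m * x) x := by
    refine ((hasDerivAt_pow 2 x).const_mul (m / 2)).congr_deriv ?_
    ring
  have hlin (x : ℝ) : HasDerivAt (fun x => m * x) m x := by
    simpa using (hasDerivAt_id x).const_mul m
  refine convexOn_of_hasDerivWithinAt2_nonneg hs (f' := fun x => f' x - m * x)
    (f'' := fun x => f'' x - m) ?_ ?_ ?_ ?_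
  · exact fun x hx => ((hf x hx).sub (hsq x)).continuousAt.continuousWithinAt
  · exact fun x hx => ((hf x (interior_subset hx)).sub (hsq x)).hasDerivWithinAt
  · exact fun x hx => ((hf' x (interior_subset hx)).sub (hlin x)).hasDerivWithinAt
  · exact fun x hx => sub_nonneg.2 (hm x (interior_subset hx))

variable {ι : Type*} {t : Finset ι} {w x : ι → ℝ}

theorem map_sum_le_of_le_deriv2 (hs : Convex ℝ s)
    (hf : ∀ x ∈ s, HasDerivAt f (f' x) x) (hf' : ∀ x ∈ s, HasDerivAt f' (f'' x) x)
    {m : ℝ} (hm : ∀ x ∈ s, m ≤ f'' x)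
    (hw₀ : ∀ i ∈ t, 0 ≤ w i) (hw₁ : ∑ i ∈ t, w i = 1) (hx : ∀ i ∈ t, x i ∈ s) :
    f (∑ i ∈ t, w i * x i) ≤
      ∑ i ∈ t, w i * f (x i) - m / 2 * (∑ i ∈ t, w i * x i ^ 2 - (∑ i ∈ t, w i * x i) ^ 2) := by
  have hjensen := (convexOn_sub_half_mul_sq_of_le_deriv2 hs hf hf' hm).map_sum_le hw₀ hw₁ hx
  simp only [smul_eq_mul, mul_sub, sum_sub_distrib] at hjensen
  have hsq : ∑ i ∈ t, w i * (m / 2 * x i ^ 2) = m / 2 * ∑ i ∈ t, w i * x i ^ 2 := by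
    rw [mul_sum]; exact sum_congr rfl fun i _ => by ring
  linarith

theorem le_map_sum_of_deriv2_le (hs : Convex ℝ s)
    (hf : ∀ x ∈ s, HasDerivAt f (f' x) x) (hf' : ∀ x ∈ s, HasDerivAt f' (f'' x) x)
    {M : ℝ} (hM : ∀ x ∈ s, f'' x ≤ M)
    (hw₀ : ∀ i ∈ t, 0 ≤ w i) (hw₁ : ∑ i ∈ t, w i = 1) (hx : ∀ i ∈ t, x i ∈ s) :
    ∑ i ∈ t, w i * f (x i) - M / 2 * (∑ i ∈ t, w i * x i ^ 2 - (∑ i ∈ t, w i * x i) ^ 2) ≤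
      f (∑ i ∈ t, w i * x i) := by
  have hneg := map_sum_le_of_le_deriv2 (f := fun x => -f x) (f'' := fun x => -f'' x) (m := -M) hs
    (fun x hx => (hf x hx).neg) (fun x hx => (hf' x hx).neg) (fun x hx => neg_le_neg (hM x hx))
    hw₀ hw₁ hx
  simp only [mul_neg, sum_neg_distrib] at hneg
  linarith

end SecondDerivativeBounds

noncomputable def logit (t : ℝ) : ℝ := log (t / (1 - t))

section Logit

variable {t : ℝ}

theorem hasDerivAt_logit (h₀ : t ≠ 0) (h₁ : t ≠ 1) : HasDerivAt logit (t * (1 - t))⁻¹ t := by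
  have h₁' : 1 - t ≠ 0 := sub_ne_zero.2 h₁.symm
  have hq : HasDerivAt (fun u => u / (1 - u)) (((1 - t) + t) / (1 - t) ^ 2) t := by
    refine ((hasDerivAt_id t).div ((hasDerivAt_id t).const_sub 1) h₁').congr_deriv ?_
    simp
  refine (hq.log (div_ne_zero h₀ h₁')).congr_deriv ?_
  field_simp
  ring

theorem hasDerivAt_inv_mul_one_sub (h₀ : t ≠ 0) (h₁ : t ≠ 1) :
    HasDerivAt (fun u => (u * (1 - u))⁻¹) (-2 * ((1 / 2 - t) / (t * (1 - t)) ^ 2)) t := by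
  have hp : HasDerivAt (fun u => u * (1 - u)) (1 - 2 * t) t := by
    refine ((hasDerivAt_id t).mul ((hasDerivAt_id t).const_sub 1)).congr_deriv ?_
    simp only [id_eq, one_mul, mul_neg, mul_one]; ring
  refine (hp.inv (mul_ne_zero h₀ (sub_ne_zero.2 h₁.symm))).congr_deriv ?_
  ring

theorem exp_logit (h₀ : 0 < t) (h₁ : t < 1) : exp (logit t) = t / (1 - t) :=
  exp_log (div_pos h₀ (sub_pos.2 h₁))

-- The function below is `-logit'' / 2`.
theorem antitoneOn_logit_curvature :
    AntitoneOn (fun t : ℝ => (1 / 2 - t) / (t * (1 - t)) ^ 2) (Set.Ioc 0 (1 / 2)) := by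
  rintro t ⟨ht₀, ht⟩ u ⟨-, hu⟩ htu
  have hpos : 0 < t * (1 - t) := mul_pos ht₀ (by linarith)
  have hprod : t * (1 - t) ≤ u * (1 - u) := by nlinarith
  dsimp only
  gcongr

variable {ι : Type*} {s : Finset ι} {w x : ι → ℝ}

theorem prod_div_one_sub_rpow_eq_exp (hx : ∀ i ∈ s, x i ∈ Set.Ioo 0 1) :
    ∏ i ∈ s, (x i / (1 - x i)) ^ w i = exp (∑ i ∈ s, w i * logit (x i)) := by
  rw [exp_sum]
  refine prod_congr rfl fun i hi => ?_
  rw [← exp_logit (hx i hi).1 (hx i hi).2, ← exp_mul, mul_comm]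

theorem sum_mul_div_sum_mul_one_sub_eq_exp (hw : ∑ i ∈ s, w i = 1)
    (h₀ : 0 < ∑ i ∈ s, w i * x i) (h₁ : ∑ i ∈ s, w i * x i < 1) :
    (∑ i ∈ s, w i * x i) / ∑ i ∈ s, w i * (1 - x i) = exp (logit (∑ i ∈ s, w i * x i)) := by
  simp only [mul_sub, mul_one, sum_sub_distrib, hw]
  exact (exp_logit h₀ h₁).symm

end Logit

theorem ky_fan_two_sided_refinement
    (n : ℕ) (a b : ℝ) (ha : 0 < a) (hab : a ≤ b) (hb : b ≤ 1 / 2)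
    (w x : Fin n → ℝ)
    (hw : ∀ i, 0 < w i) (hws : ∑ i, w i = 1)
    (hx : ∀ i, x i ∈ Set.Icc a b) :
    Real.exp ((1 / 2 - b) / (b * (1 - b)) ^ 2 *
          (∑ i, w i * (x i) ^ 2 - (∑ i, w i * x i) ^ 2)) *
        ∏ i, (x i / (1 - x i)) ^ w i ≤
      (∑ i, w i * x i) / (∑ i, w i * (1 - x i)) ∧
    (∑ i, w i * x i) / (∑ i, w i * (1 - x i)) ≤
      Real.exp ((1 / 2 - a) / (a * (1 - a)) ^ 2 *
          (∑ i, w i * (x i) ^ 2 - (∑ i, w i * x i) ^ 2)) *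
        ∏ i, (x i / (1 - x i)) ^ w i := by
  have hI : Set.Icc a b ⊆ Set.Ioc 0 (1 / 2) := Set.Icc_subset_Ioc ha hb
  have hI' : Set.Icc a b ⊆ Set.Ioo 0 1 := fun t ht => ⟨(hI ht).1, by linarith [(hI ht).2]⟩
  have hlogit (t) (ht : t ∈ Set.Icc a b) : HasDerivAt logit (t * (1 - t))⁻¹ t :=
    hasDerivAt_logit (hI' ht).1.ne' (hI' ht).2.ne
  have hlogit' (t) (ht : t ∈ Set.Icc a b) :
      HasDerivAt (fun u => (u * (1 - u))⁻¹) (-2 * ((1 / 2 - t) / (t * (1 - t)) ^ 2)) t :=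
    hasDerivAt_inv_mul_one_sub (hI' ht).1.ne' (hI' ht).2.ne
  have hw₀ : ∀ i ∈ univ, 0 ≤ w i := fun i _ => (hw i).le
  have hxI : ∀ i ∈ univ, x i ∈ Set.Icc a b := fun i _ => hx i
  have hmean := hI' ((convex_Icc a b).sum_mem hw₀ hws hxI)
  simp only [smul_eq_mul] at hmean
  rw [sum_mul_div_sum_mul_one_sub_eq_exp hws hmean.1 hmean.2,
    prod_div_one_sub_rpow_eq_exp fun i _ => hI' (hx i), ← exp_add, ← exp_add,
    exp_le_exp, exp_le_exp]
  constructor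
  · have hcurv (t) (ht : t ∈ Set.Icc a b) :
        -2 * ((1 / 2 - t) / (t * (1 - t)) ^ 2) ≤ -2 * ((1 / 2 - b) / (b * (1 - b)) ^ 2) := by
      linarith [antitoneOn_logit_curvature (hI ht) (hI ⟨hab, le_rfl⟩) ht.2]
    have hgap := le_map_sum_of_deriv2_le (convex_Icc a b) hlogit hlogit' hcurv hw₀ hws hxI
    linarith
  · have hcurv (t) (ht : t ∈ Set.Icc a b) :
        -2 * ((1 / 2 - a) / (a * (1 - a)) ^ 2) ≤ -2 * ((1 / 2 - t) / (t * (1 - t)) ^ 2) := by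
      linarith [antitoneOn_logit_curvature (hI ⟨le_rfl, hab⟩) (hI ht) ht.1]
    have hgap := map_sum_le_of_le_deriv2 (convex_Icc a b) hlogit hlogit' hcurv hw₀ hws hxI
    linarith
end

section
/- Let s > 2 and let X be a discrete random variable with values x_i ∈ [a,b] ⊂ (0,∞) and probabilities p_i. Then (1/2) s(s−1) a^{s−2} Var(X) ≤ E(X^s) − (EX)^s ≤ (1/2) s(s−1) b^{s−2} Var(X), where EX = ∑ p_i x_i, E(X^s) = ∑ p_i x_i^s, Var(X) = E(X²) − (EX)². -/
open Set Finset

private lemma convexOn_aux (s d e a b : ℝ) (hs : 2 < s) (ha : 0 < a)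
    (h : ∀ x ∈ Set.Ioo a b, 0 ≤ 2 * d + e * (s * (s - 1) * x ^ (s - 2))) :
    ConvexOn ℝ (Set.Icc a b) (fun x => d * x ^ 2 + e * x ^ s) := by
  have hint : interior (Set.Icc a b) = Set.Ioo a b := interior_Icc
  refine convexOn_of_hasDerivWithinAt2_nonneg (convex_Icc a b) ?_
    (f' := fun x => d * (2 * x) + e * (s * x ^ (s - 1)))
    (f'' := fun x => 2 * d + e * (s * ((s - 1) * x ^ (s - 2)))) ?_ ?_ ?_
  · intro x hx
    have hx0 : x ≠ 0 := (lt_of_lt_of_le ha hx.1).ne'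
    exact (continuousWithinAt_const.mul (continuousWithinAt_id.pow 2)).add
      (continuousWithinAt_const.mul
        ((Real.continuousAt_rpow_const x s (Or.inl hx0)).continuousWithinAt))
  · intro x hx
    rw [hint] at hx
    have hx0 : x ≠ 0 := (lt_of_lt_of_le ha hx.1.le).ne'
    have h1 : HasDerivAt (fun y : ℝ => y ^ s) (s * x ^ (s - 1)) x := by
      simpa [mul_comm] using Real.hasDerivAt_rpow_const (x := x) (p := s) (Or.inl hx0)
    have h2 : HasDerivAt (fun y : ℝ => d * y ^ 2 + e * y ^ s)
        (d * (2 * x) + e * (s * x ^ (s - 1))) x := by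
      have : HasDerivAt (fun y : ℝ => y ^ 2) (2 * x) x := by
        simpa using hasDerivAt_pow 2 x
      exact (this.const_mul d).add (h1.const_mul e)
    exact h2.hasDerivWithinAt
  · intro x hx
    rw [hint] at hx
    have hx0 : x ≠ 0 := (lt_of_lt_of_le ha hx.1.le).ne'
    have h1 : HasDerivAt (fun y : ℝ => y ^ (s - 1)) ((s - 1) * x ^ (s - 1 - 1)) x := by
      simpa [mul_comm] using Real.hasDerivAt_rpow_const (x := x) (p := s - 1) (Or.inl hx0)
    have h1' : HasDerivAt (fun y : ℝ => y ^ (s - 1)) ((s - 1) * x ^ (s - 2)) x := by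
      convert h1 using 2; ring_nf
    have h2 : HasDerivAt (fun y : ℝ => d * (2 * y) + e * (s * y ^ (s - 1)))
        (2 * d + e * (s * ((s - 1) * x ^ (s - 2)))) x := by
      have hA : HasDerivAt (fun y : ℝ => d * (2 * y)) (2 * d) x := by
        simpa [mul_comm] using ((hasDerivAt_id x).const_mul 2).const_mul d
      exact hA.add ((h1'.const_mul s).const_mul e)
    exact h2.hasDerivWithinAt
  · intro x hx
    rw [hint] at hx
    have := h x hx
    nlinarith [this]

theorem moment_inequality_s_gt_two
    (n : ℕ) (s a b : ℝ) (hs : 2 < s) (ha : 0 < a) (hab : a ≤ b)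
    (p x : Fin n → ℝ)
    (hp : ∀ i, 0 < p i) (hps : ∑ i, p i = 1)
    (hx : ∀ i, x i ∈ Set.Icc a b) :
    (1 / 2) * s * (s - 1) * a ^ (s - 2) *
        (∑ i, p i * (x i) ^ 2 - (∑ i, p i * x i) ^ 2) ≤
      ∑ i, p i * x i ^ s - (∑ i, p i * x i) ^ s ∧
    ∑ i, p i * x i ^ s - (∑ i, p i * x i) ^ s ≤
      (1 / 2) * s * (s - 1) * b ^ (s - 2) *
        (∑ i, p i * (x i) ^ 2 - (∑ i, p i * x i) ^ 2) := by
  have hs1 : 0 < s - 1 := by linarith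
  have hs2 : 0 < s - 2 := by linarith
  have hb : 0 < b := lt_of_lt_of_le ha hab
  -- lower bound: f x = (-(c/2)) x^2 + 1 * x^s with c = s(s-1)a^(s-2)
  set c : ℝ := s * (s - 1) * a ^ (s - 2) with hc
  set C : ℝ := s * (s - 1) * b ^ (s - 2) with hC
  have hconv1 : ConvexOn ℝ (Set.Icc a b) (fun t => (-(c / 2)) * t ^ 2 + 1 * t ^ s) := by
    apply convexOn_aux s _ 1 a b hs ha
    intro t ht
    have : a ^ (s - 2) ≤ t ^ (s - 2) :=
      Real.rpow_le_rpow ha.le ht.1.le hs2.le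
    have hss : 0 < s * (s - 1) := by positivity
    nlinarith [mul_le_mul_of_nonneg_left this hss.le]
  have hconv2 : ConvexOn ℝ (Set.Icc a b) (fun t => (C / 2) * t ^ 2 + (-1) * t ^ s) := by
    apply convexOn_aux s _ (-1) a b hs ha
    intro t ht
    have : t ^ (s - 2) ≤ b ^ (s - 2) :=
      Real.rpow_le_rpow (lt_of_lt_of_le ha ht.1.le).le ht.2.le hs2.le
    have hss : 0 < s * (s - 1) := by positivity
    nlinarith [mul_le_mul_of_nonneg_left this hss.le]
  have hmem : ∀ i ∈ Finset.univ (α := Fin n), x i ∈ Set.Icc a b := fun i _ => hx i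
  have hw : ∀ i ∈ Finset.univ (α := Fin n), 0 ≤ p i := fun i _ => (hp i).le
  have j1 := hconv1.map_sum_le hw hps hmem
  have j2 := hconv2.map_sum_le hw hps hmem
  simp only [smul_eq_mul] at j1 j2
  set m : ℝ := ∑ i, p i * x i with hm
  have e1 : ∑ i, p i * ((-(c / 2)) * x i ^ 2 + 1 * x i ^ s)
      = (-(c / 2)) * (∑ i, p i * x i ^ 2) + ∑ i, p i * x i ^ s := by
    rw [Finset.mul_sum, ← Finset.sum_add_distrib]
    congr 1; ext i; ring
  have e2 : ∑ i, p i * ((C / 2) * x i ^ 2 + (-1) * x i ^ s)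
      = (C / 2) * (∑ i, p i * x i ^ 2) - ∑ i, p i * x i ^ s := by
    rw [Finset.mul_sum, sub_eq_add_neg, ← Finset.sum_neg_distrib, ← Finset.sum_add_distrib]
    congr 1; ext i; ring
  rw [e1] at j1
  rw [e2] at j2
  constructor
  · have : (-(c / 2)) * m ^ 2 + 1 * m ^ s ≤
        (-(c / 2)) * (∑ i, p i * x i ^ 2) + ∑ i, p i * x i ^ s := j1
    have hgoal : (1 / 2) * s * (s - 1) * a ^ (s - 2) = c / 2 := by rw [hc]; ring
    rw [hgoal]
    linarith
  · have : (C / 2) * m ^ 2 + (-1) * m ^ s ≤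
        (C / 2) * (∑ i, p i * x i ^ 2) - ∑ i, p i * x i ^ s := j2
    have hgoal : (1 / 2) * s * (s - 1) * b ^ (s - 2) = C / 2 := by rw [hC]; ring
    rw [hgoal]
    linarith
end

section
/- Let 0 < s < 1 and let X take values x_i ∈ [a,b] ⊂ (0,∞) with probabilities p_i. Then (1/2) s(1−s) b^{s−2} Var(X) ≤ (EX)^s − E(X^s) ≤ (1/2) s(1−s) a^{s−2} Var(X), where EX = ∑ p_i x_i, E(X^s) = ∑ p_i x_i^s, Var(X) = ∑ p_i x_i² − (EX)². -/
/-!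
If `c ≤ f'' ≤ C` on an interval, then `f - c x² / 2` is convex and `f - C x² / 2` is concave there,
and Jensen's inequality for these two functions traps the Jensen gap `E f(X) - f(E X)` between
`c / 2 · Var X` and `C / 2 · Var X`. For `f x = x ^ s` with `0 ≤ s ≤ 1` we have
`f'' x = s (s - 1) x ^ (s - 2)`, which on `[a, b]` lies between its values at `a` and at `b`.
-/

open Finset Set

section SecondDerivative

variable {D : Set ℝ} {f f' f'' : ℝ → ℝ} {c : ℝ}

theorem convexOn_sub_mul_sq_of_le_hasDerivWithinAt2 (hD : Convex ℝ D) (hf : ContinuousOn f D)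
    (hf' : ∀ x ∈ interior D, HasDerivWithinAt f (f' x) (interior D) x)
    (hf'' : ∀ x ∈ interior D, HasDerivWithinAt f' (f'' x) (interior D) x)
    (hc : ∀ x ∈ interior D, c ≤ f'' x) :
    ConvexOn ℝ D fun x ↦ f x - c / 2 * x ^ 2 := by
  refine convexOn_of_hasDerivWithinAt2_nonneg (f' := fun x ↦ f' x - c * x)
    (f'' := fun x ↦ f'' x - c) hD (by fun_prop) (fun x hx ↦ ?_) (fun x hx ↦ ?_)
    fun x hx ↦ sub_nonneg.2 (hc x hx)
  · exact ((hf' x hx).fun_sub ((hasDerivAt_pow 2 x).const_mul (c / 2)).hasDerivWithinAt).congr_deriv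
      (by ring)
  · exact ((hf'' x hx).fun_sub ((hasDerivAt_id x).const_mul c).hasDerivWithinAt).congr_deriv
      (by ring)

theorem concaveOn_sub_mul_sq_of_hasDerivWithinAt2_le (hD : Convex ℝ D) (hf : ContinuousOn f D)
    (hf' : ∀ x ∈ interior D, HasDerivWithinAt f (f' x) (interior D) x)
    (hf'' : ∀ x ∈ interior D, HasDerivWithinAt f' (f'' x) (interior D) x)
    (hc : ∀ x ∈ interior D, f'' x ≤ c) :
    ConcaveOn ℝ D fun x ↦ f x - c / 2 * x ^ 2 := by
  refine concaveOn_of_hasDerivWithinAt2_nonpos (f' := fun x ↦ f' x - c * x)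
    (f'' := fun x ↦ f'' x - c) hD (by fun_prop) (fun x hx ↦ ?_) (fun x hx ↦ ?_)
    fun x hx ↦ sub_nonpos.2 (hc x hx)
  · exact ((hf' x hx).fun_sub ((hasDerivAt_pow 2 x).const_mul (c / 2)).hasDerivWithinAt).congr_deriv
      (by ring)
  · exact ((hf'' x hx).fun_sub ((hasDerivAt_id x).const_mul c).hasDerivWithinAt).congr_deriv
      (by ring)

end SecondDerivative

section JensenGap

variable {ι : Type*} {t : Finset ι} {w x : ι → ℝ} {D : Set ℝ} {f : ℝ → ℝ} {c : ℝ}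

theorem ConvexOn.mul_variance_le_jensen_gap (hf : ConvexOn ℝ D fun y ↦ f y - c / 2 * y ^ 2)
    (hw₀ : ∀ i ∈ t, 0 ≤ w i) (hw₁ : ∑ i ∈ t, w i = 1) (hx : ∀ i ∈ t, x i ∈ D) :
    c / 2 * (∑ i ∈ t, w i * x i ^ 2 - (∑ i ∈ t, w i * x i) ^ 2) ≤
      ∑ i ∈ t, w i * f (x i) - f (∑ i ∈ t, w i * x i) := by
  have h := hf.map_sum_le hw₀ hw₁ hx
  simp only [smul_eq_mul, mul_sub, sum_sub_distrib, mul_left_comm (w _), ← mul_sum] at h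
  linarith

theorem ConcaveOn.jensen_gap_le_mul_variance (hf : ConcaveOn ℝ D fun y ↦ f y - c / 2 * y ^ 2)
    (hw₀ : ∀ i ∈ t, 0 ≤ w i) (hw₁ : ∑ i ∈ t, w i = 1) (hx : ∀ i ∈ t, x i ∈ D) :
    ∑ i ∈ t, w i * f (x i) - f (∑ i ∈ t, w i * x i) ≤
      c / 2 * (∑ i ∈ t, w i * x i ^ 2 - (∑ i ∈ t, w i * x i) ^ 2) := by
  have h := hf.le_map_sum hw₀ hw₁ hx
  simp only [smul_eq_mul, mul_sub, sum_sub_distrib, mul_left_comm (w _), ← mul_sum] at h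
  linarith

end JensenGap

section Rpow

variable {s a b : ℝ}

theorem hasDerivAt_const_mul_rpow_sub_one {x : ℝ} (hx : 0 < x) :
    HasDerivAt (fun y ↦ s * y ^ (s - 1)) (s * (s - 1) * x ^ (s - 2)) x := by
  refine ((Real.hasDerivAt_rpow_const (p := s - 1) (Or.inl hx.ne')).const_mul s).congr_deriv ?_
  rw [sub_sub, one_add_one_eq_two, mul_assoc]

theorem convexOn_rpow_sub_mul_sq (hs₀ : 0 ≤ s) (hs₁ : s ≤ 1) (ha : 0 < a) :
    ConvexOn ℝ (Icc a b) fun x ↦ x ^ s - s * (s - 1) * a ^ (s - 2) / 2 * x ^ 2 := by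
  refine convexOn_sub_mul_sq_of_le_hasDerivWithinAt2 (f' := fun x ↦ s * x ^ (s - 1))
    (f'' := fun x ↦ s * (s - 1) * x ^ (s - 2)) (convex_Icc a b)
    (Real.continuous_rpow_const hs₀).continuousOn ?_ ?_ ?_
  all_goals rw [interior_Icc]
  · exact fun x hx ↦ (Real.hasDerivAt_rpow_const (Or.inl (ha.trans hx.1).ne')).hasDerivWithinAt
  · exact fun x hx ↦ (hasDerivAt_const_mul_rpow_sub_one (ha.trans hx.1)).hasDerivWithinAt
  · exact fun x hx ↦ mul_le_mul_of_nonpos_left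
      (Real.rpow_le_rpow_of_nonpos ha hx.1.le (by linarith))
      (mul_nonpos_of_nonneg_of_nonpos hs₀ (by linarith))

theorem concaveOn_rpow_sub_mul_sq (hs₀ : 0 ≤ s) (hs₁ : s ≤ 1) (ha : 0 < a) :
    ConcaveOn ℝ (Icc a b) fun x ↦ x ^ s - s * (s - 1) * b ^ (s - 2) / 2 * x ^ 2 := by
  refine concaveOn_sub_mul_sq_of_hasDerivWithinAt2_le (f' := fun x ↦ s * x ^ (s - 1))
    (f'' := fun x ↦ s * (s - 1) * x ^ (s - 2)) (convex_Icc a b)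
    (Real.continuous_rpow_const hs₀).continuousOn ?_ ?_ ?_
  all_goals rw [interior_Icc]
  · exact fun x hx ↦ (Real.hasDerivAt_rpow_const (Or.inl (ha.trans hx.1).ne')).hasDerivWithinAt
  · exact fun x hx ↦ (hasDerivAt_const_mul_rpow_sub_one (ha.trans hx.1)).hasDerivWithinAt
  · exact fun x hx ↦ mul_le_mul_of_nonpos_left
      (Real.rpow_le_rpow_of_nonpos (ha.trans hx.1) hx.2.le (by linarith))
      (mul_nonpos_of_nonneg_of_nonpos hs₀ (by linarith))

end Rpow

theorem moment_inequality_s_lt_one_general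
    (n : ℕ) (s a b : ℝ) (hs0 : 0 < s) (hs1 : s < 1) (ha : 0 < a)
    (p x : Fin n → ℝ)
    (hp : ∀ i, 0 < p i) (hps : ∑ i, p i = 1)
    (hx : ∀ i, x i ∈ Set.Icc a b) :
    (1 / 2) * s * (1 - s) * b ^ (s - 2) *
        (∑ i, p i * (x i) ^ 2 - (∑ i, p i * x i) ^ 2) ≤
      (∑ i, p i * x i) ^ s - ∑ i, p i * x i ^ s ∧
    (∑ i, p i * x i) ^ s - ∑ i, p i * x i ^ s ≤
      (1 / 2) * s * (1 - s) * a ^ (s - 2) *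
        (∑ i, p i * (x i) ^ 2 - (∑ i, p i * x i) ^ 2) := by
  have hp₀ (i : Fin n) (_ : i ∈ Finset.univ) : 0 ≤ p i := (hp i).le
  have hx' (i : Fin n) (_ : i ∈ Finset.univ) : x i ∈ Icc a b := hx i
  have lower := (concaveOn_rpow_sub_mul_sq hs0.le hs1.le ha).jensen_gap_le_mul_variance hp₀ hps hx'
  have upper := (convexOn_rpow_sub_mul_sq hs0.le hs1.le ha).mul_variance_le_jensen_gap hp₀ hps hx'
  constructor
  · linear_combination lower
  · linear_combination upper

theorem moment_inequality_s_lt_one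
    (n : ℕ) (s a b : ℝ) (hs0 : 0 < s) (hs1 : s < 1) (ha : 0 < a) (hab : a ≤ b)
    (p x : Fin n → ℝ)
    (hp : ∀ i, 0 < p i) (hps : ∑ i, p i = 1)
    (hx : ∀ i, x i ∈ Set.Icc a b) :
    (1 / 2) * s * (1 - s) * b ^ (s - 2) *
        (∑ i, p i * (x i) ^ 2 - (∑ i, p i * x i) ^ 2) ≤
      (∑ i, p i * x i) ^ s - ∑ i, p i * x i ^ s ∧
    (∑ i, p i * x i) ^ s - ∑ i, p i * x i ^ s ≤
      (1 / 2) * s * (1 - s) * a ^ (s - 2) *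
        (∑ i, p i * (x i) ^ 2 - (∑ i, p i * x i) ^ 2) :=
  moment_inequality_s_lt_one_general n s a b hs0 hs1 ha p x hp hps hx
end
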